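/- arXiv:1311.5121 — 5 statements merged into one kernel-verified Lean document; each statement's English description precedes it below -/
import Mathlib

section
/- Let p : ℝⁿ → [1,∞) be locally log-Hölder continuous with constant C and with p⁺ := sup p < ∞. Then for every m > 0 there exists c₁ > 0 depending only on m, C and p⁺ such that for every cube Q ⊂ ℝⁿ with side length ℓ(Q) ≤ 1, every x ∈ Q, and every f ∈ L¹(Q) with ⨍_Q |f| dy ≤ max{1, |Q|^{−m}}, one has (⨍_Q |f(y)| dy)^{p(x)} ≤ c₁ ⨍_Q |f(y)|^{p(y)} dy + c₁ |Q|^m. -/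
/-!
Let `q` be the infimum of `p` over the cube `Q`. Log-Hölder continuity gives
`(p y - q) log ℓ⁻¹ ≤ max C 0` on `Q`, hence `|Q| ^ (-m (p y - q)) ≤ K := exp (n m max C 0)`.
Split `(⨍ |f|) ^ p x = (⨍ |f|) ^ (p x - q) * (⨍ |f|) ^ q`. The first factor is at most `K`
because `⨍ |f| ≤ max 1 |Q| ^ (-m)`. By Jensen the second is at most `⨍ |f| ^ q`, and pointwise
`t ^ q ≤ B ^ (q - p y) t ^ p y + B` with `B = |Q| ^ m`, by comparing `t` with `B`.
-/

open MeasureTheory Set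

noncomputable section

/-- The axis-parallel cube in `ℝⁿ` with lower corner `z` and side length `ℓ`. -/
def cube (n : ℕ) (z : Fin n → ℝ) (ℓ : ℝ) : Set (Fin n → ℝ) :=
  Set.Icc z (fun i => z i + ℓ)

/-- `p` is locally log-Hölder continuous with constant `C`. -/
def LogHolder (n : ℕ) (C : ℝ) (p : (Fin n → ℝ) → ℝ) : Prop :=
  ∀ x y : Fin n → ℝ, x ≠ y →
    |p x - p y| ≤ C / Real.log (Real.exp 1 + 1 / ‖x - y‖)

open scoped ENNReal

theorem Real.rpow_le_rpow_sub_mul_rpow_add {t B q r : ℝ} (ht : 0 ≤ t) (hB₀ : 0 < B)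
    (hB₁ : B ≤ 1) (hq : 1 ≤ q) (hqr : q ≤ r) : t ^ q ≤ B ^ (q - r) * t ^ r + B := by
  rcases le_or_gt t B with htB | hBt
  · have htq : t ^ q ≤ B := calc
      t ^ q ≤ B ^ q := Real.rpow_le_rpow ht htB (by linarith)
      _ ≤ B ^ (1 : ℝ) := Real.rpow_le_rpow_of_exponent_ge hB₀ hB₁ hq
      _ = B := Real.rpow_one B
    have : 0 ≤ B ^ (q - r) * t ^ r := by positivity
    linarith
  · have ht₀ : 0 < t := hB₀.trans hBt
    calc t ^ q = t ^ (q - r) * t ^ r := by rw [← Real.rpow_add ht₀, sub_add_cancel]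
      _ ≤ B ^ (q - r) * t ^ r := by
          gcongr ?_ * _
          exact Real.rpow_le_rpow_of_nonpos hB₀ hBt.le (sub_nonpos.mpr hqr)
      _ ≤ B ^ (q - r) * t ^ r + B := le_add_of_nonneg_right hB₀.le

theorem Real.rpow_mul_sub_le_exp {ℓ m q r D : ℝ} (n : ℕ) (hℓ : 0 < ℓ) (hm : 0 ≤ m)
    (h : (r - q) * Real.log ℓ⁻¹ ≤ D) : (ℓ ^ n) ^ (m * (q - r)) ≤ Real.exp (n * m * D) := by
  rw [Real.rpow_def_of_pos (pow_pos hℓ n), Real.exp_le_exp, Real.log_pow]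
  rw [Real.log_inv] at h
  calc n * Real.log ℓ * (m * (q - r)) = n * m * ((r - q) * -Real.log ℓ) := by ring
    _ ≤ n * m * D := mul_le_mul_of_nonneg_left h (by positivity)

theorem Real.rpow_le_of_le_max_one_rpow_neg {A V m e K : ℝ} (hA : 0 ≤ A)
    (hAV : A ≤ max 1 (V ^ (-m))) (hV : 0 < V) (he : 0 ≤ e) (hK : 1 ≤ K)
    (hVK : V ^ (-m * e) ≤ K) : A ^ e ≤ K := by
  refine (Real.rpow_le_rpow hA hAV he).trans ?_
  rcases max_cases 1 (V ^ (-m)) with ⟨hmax, -⟩ | ⟨hmax, -⟩ <;> rw [hmax]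
  · rwa [Real.one_rpow]
  · rwa [← Real.rpow_mul hV.le]

section Average

variable {α : Type*} [MeasurableSpace α]

theorem rpow_lintegral_le_lintegral_rpow {ν : Measure α} (hν : ν univ ≤ 1) {f : α → ℝ≥0∞}
    (hf : AEMeasurable f ν) {q : ℝ} (hq : 1 ≤ q) :
    (∫⁻ x, f x ∂ν) ^ q ≤ ∫⁻ x, f x ^ q ∂ν := by
  have hq₀ : 0 < q := one_pos.trans_le hq
  have hHolder := eLpNorm'_le_eLpNorm'_mul_rpow_measure_univ one_pos hq hf.aestronglyMeasurable
  have hνq : ν univ ^ (1 - 1 / q) ≤ 1 :=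
    ENNReal.rpow_le_one hν (sub_nonneg.mpr (div_le_one_of_le₀ hq hq₀.le))
  simp only [eLpNorm', enorm_eq_self, ENNReal.rpow_one, div_one] at hHolder
  calc (∫⁻ x, f x ∂ν) ^ q ≤ ((∫⁻ x, f x ^ q ∂ν) ^ (1 / q)) ^ q := by
        gcongr
        exact hHolder.trans (mul_le_of_le_one_right' hνq)
    _ = ∫⁻ x, f x ^ q ∂ν := by
        rw [← ENNReal.rpow_mul, one_div_mul_cancel hq₀.ne', ENNReal.rpow_one]

theorem rpow_laverage_le_laverage_rpow {μ : Measure α} {f : α → ℝ≥0∞} (hf : AEMeasurable f μ)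
    {q : ℝ} (hq : 1 ≤ q) : (⨍⁻ x, f x ∂μ) ^ q ≤ ⨍⁻ x, f x ^ q ∂μ := by
  simp only [laverage_eq']
  exact rpow_lintegral_le_lintegral_rpow (by simp) (hf.smul_measure _) hq

theorem rpow_laverage_le_mul_laverage_rpow_add {μ : Measure α} {g p : α → ℝ}
    (hg : AEMeasurable g μ) (hg₀ : ∀ y, 0 ≤ g y) {q B K : ℝ} (hq : 1 ≤ q)
    (hB₀ : 0 < B) (hB₁ : B ≤ 1) (hpK : ∀ᵐ y ∂μ, q ≤ p y ∧ B ^ (q - p y) ≤ K) :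
    (⨍⁻ y, ENNReal.ofReal (g y) ∂μ) ^ q ≤
      ENNReal.ofReal K * ⨍⁻ y, ENNReal.ofReal (g y ^ p y) ∂μ + ENNReal.ofReal B := by
  have hpointwise : ∀ᵐ y ∂μ, ENNReal.ofReal (g y) ^ q ≤
      ENNReal.ofReal K * ENNReal.ofReal (g y ^ p y) + ENNReal.ofReal B := by
    filter_upwards [hpK] with y ⟨hqp, hBK⟩
    have hK₀ : 0 ≤ K := (Real.rpow_nonneg hB₀.le _).trans hBK
    rw [ENNReal.ofReal_rpow_of_nonneg (hg₀ y) (by linarith), ← ENNReal.ofReal_mul hK₀,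
      ← ENNReal.ofReal_add (mul_nonneg hK₀ (Real.rpow_nonneg (hg₀ y) _)) hB₀.le]
    refine ENNReal.ofReal_le_ofReal
      ((Real.rpow_le_rpow_sub_mul_rpow_add (hg₀ y) hB₀ hB₁ hq hqp).trans ?_)
    gcongr
    exact Real.rpow_nonneg (hg₀ y) _
  calc (⨍⁻ y, ENNReal.ofReal (g y) ∂μ) ^ q
      ≤ ⨍⁻ y, ENNReal.ofReal (g y) ^ q ∂μ := rpow_laverage_le_laverage_rpow hg.ennreal_ofReal hq
    _ ≤ ⨍⁻ y, (ENNReal.ofReal K * ENNReal.ofReal (g y ^ p y) + ENNReal.ofReal B) ∂μ :=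
        laverage_mono_ae hpointwise
    _ ≤ ENNReal.ofReal K * ⨍⁻ y, ENNReal.ofReal (g y ^ p y) ∂μ + ENNReal.ofReal B := by
        simp only [laverage_eq']
        rw [lintegral_add_right _ measurable_const, lintegral_const_mul' _ _ ENNReal.ofReal_ne_top,
          lintegral_const]
        gcongr
        exact mul_le_of_le_one_right' (by simp)

theorem ofReal_rpow_setAverage_le {μ : Measure α} {s : Set α} (hs : MeasurableSet s)
    {f p : α → ℝ} (hf : IntegrableOn f s μ) {q r V m K : ℝ} (hq : 1 ≤ q)
    (hqp : ∀ y ∈ s, q ≤ p y) (hqr : q ≤ r) (hV₀ : 0 < V) (hV₁ : V ≤ 1) (hm : 0 ≤ m)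
    (hK : 1 ≤ K) (hVp : ∀ y ∈ s, V ^ (m * (q - p y)) ≤ K) (hVr : V ^ (m * (q - r)) ≤ K)
    (hfs : ⨍ y in s, |f y| ∂μ ≤ max 1 (V ^ (-m))) :
    ENNReal.ofReal ((⨍ y in s, |f y| ∂μ) ^ r) ≤
      ENNReal.ofReal (K ^ 2) * ⨍⁻ y in s, ENNReal.ofReal (|f y| ^ p y) ∂μ +
        ENNReal.ofReal (K ^ 2) * ENNReal.ofReal (V ^ m) := by
  set A := ⨍ y in s, |f y| ∂μ
  have hA₀ : 0 ≤ A := integral_nonneg fun _ => abs_nonneg _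
  have hsmall : ENNReal.ofReal A ^ (r - q) ≤ ENNReal.ofReal K := by
    rw [ENNReal.ofReal_rpow_of_nonneg hA₀ (sub_nonneg.mpr hqr)]
    refine ENNReal.ofReal_le_ofReal
      (Real.rpow_le_of_le_max_one_rpow_neg hA₀ hfs hV₀ (sub_nonneg.mpr hqr) hK ?_)
    convert hVr using 2
    ring
  have hjensen : ENNReal.ofReal A ^ q ≤ ENNReal.ofReal K *
      ⨍⁻ y in s, ENNReal.ofReal (|f y| ^ p y) ∂μ + ENNReal.ofReal (V ^ m) := by
    rw [ofReal_setAverage hf.abs (ae_of_all _ fun _ => abs_nonneg _), ← setLAverage_eq]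
    refine rpow_laverage_le_mul_laverage_rpow_add hf.abs.aemeasurable (fun _ => abs_nonneg _) hq
      (by positivity) (Real.rpow_le_one hV₀.le hV₁ hm) ?_
    filter_upwards [ae_restrict_mem hs] with y hy
    rw [← Real.rpow_mul hV₀.le]
    exact ⟨hqp y hy, hVp y hy⟩
  calc ENNReal.ofReal (A ^ r) = ENNReal.ofReal A ^ (r - q) * ENNReal.ofReal A ^ q := by
        rw [← ENNReal.rpow_add_of_nonneg _ _ (sub_nonneg.mpr hqr) (by linarith), sub_add_cancel,
          ENNReal.ofReal_rpow_of_nonneg hA₀ (by linarith)]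
    _ ≤ ENNReal.ofReal K * (ENNReal.ofReal K * ⨍⁻ y in s, ENNReal.ofReal (|f y| ^ p y) ∂μ +
          ENNReal.ofReal (V ^ m)) := mul_le_mul' hsmall hjensen
    _ ≤ _ := by
        rw [sq, ENNReal.ofReal_mul (by positivity), mul_add, mul_assoc]
        gcongr
        exact le_mul_of_one_le_left zero_le (ENNReal.one_le_ofReal.mpr hK)

end Average

section LogHolder

variable {n : ℕ} {C : ℝ} {p : (Fin n → ℝ) → ℝ}

theorem LogHolder.abs_sub_mul_log_le (hp : LogHolder n C p) {x y : Fin n → ℝ} {ℓ : ℝ}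
    (hxy : ‖x - y‖ ≤ ℓ) : |p x - p y| * Real.log ℓ⁻¹ ≤ max C 0 := by
  rcases eq_or_ne x y with rfl | hne
  · simp
  have hd : 0 < ‖x - y‖ := norm_pos_iff.mpr (sub_ne_zero.mpr hne)
  have hlog : Real.log ℓ⁻¹ ≤ Real.log (Real.exp 1 + 1 / ‖x - y‖) := by
    refine Real.log_le_log (inv_pos.mpr (hd.trans_le hxy)) ?_
    rw [one_div]
    linarith [inv_anti₀ hd hxy, Real.exp_pos 1]
  have hlog₀ : 0 < Real.log (Real.exp 1 + 1 / ‖x - y‖) :=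
    Real.log_pos (by linarith [Real.add_one_le_exp 1, one_div_pos.mpr hd])
  calc |p x - p y| * Real.log ℓ⁻¹ ≤ |p x - p y| * Real.log (Real.exp 1 + 1 / ‖x - y‖) :=
        mul_le_mul_of_nonneg_left hlog (abs_nonneg _)
    _ ≤ C := (le_div_iff₀ hlog₀).mp (hp x y hne)
    _ ≤ max C 0 := le_max_left C 0

theorem LogHolder.sub_csInf_mul_log_le (hp : LogHolder n C p) {s : Set (Fin n → ℝ)}
    (hbdd : BddBelow (p '' s)) {ℓ : ℝ} (hs : ∀ x ∈ s, ∀ y ∈ s, ‖x - y‖ ≤ ℓ) {w : Fin n → ℝ}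
    (hw : w ∈ s) : (p w - sInf (p '' s)) * Real.log ℓ⁻¹ ≤ max C 0 := by
  rcases le_or_gt (Real.log ℓ⁻¹) 0 with hL | hL
  · have hinf : sInf (p '' s) ≤ p w := csInf_le hbdd (mem_image_of_mem p hw)
    exact (mul_nonpos_of_nonneg_of_nonpos (sub_nonneg.mpr hinf) hL).trans (le_max_right C 0)
  rw [← le_div_iff₀ hL, sub_le_comm]
  refine le_csInf (Set.Nonempty.image p ⟨w, hw⟩) (forall_mem_image.mpr fun y hy => ?_)
  rw [sub_le_comm, le_div_iff₀ hL]
  exact (mul_le_mul_of_nonneg_right (le_abs_self _) hL.le).trans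
    (hp.abs_sub_mul_log_le (hs w hw y hy))

end LogHolder

section Cube

variable {n : ℕ} {z : Fin n → ℝ} {ℓ : ℝ}

theorem volume_cube (hℓ : 0 ≤ ℓ) : volume (cube n z ℓ) = ENNReal.ofReal (ℓ ^ n) := by
  simp [cube, Real.volume_Icc_pi, ENNReal.ofReal_pow hℓ]

theorem left_mem_cube (hℓ : 0 ≤ ℓ) : z ∈ cube n z ℓ :=
  ⟨le_rfl, fun _ => le_add_of_nonneg_right hℓ⟩

theorem norm_sub_le_of_mem_cube (hℓ : 0 ≤ ℓ) {x y : Fin n → ℝ} (hx : x ∈ cube n z ℓ)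
    (hy : y ∈ cube n z ℓ) : ‖x - y‖ ≤ ℓ := by
  refine (pi_norm_le_iff_of_nonneg hℓ).mpr fun i => ?_
  rw [Pi.sub_apply, Real.norm_eq_abs, abs_le]
  have := hx.1 i; have := hx.2 i; have := hy.1 i; have := hy.2 i
  constructor <;> linarith

end Cube

/-- The key estimate for variable exponents: if `p : ℝⁿ → [1,∞)` is locally log-Hölder
continuous with constant `C` and `p⁺ := sup p < ∞`, then for every `m > 0` there is
`c₁ = c₁(m, C, p⁺) > 0` such that for every cube `Q` with `ℓ(Q) ≤ 1`, every `x ∈ Q` and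
every `f ∈ L¹(Q)` with `⨍_Q |f| ≤ max {1, |Q|^{-m}}` one has
`(⨍_Q |f|)^(p x) ≤ c₁ ⨍_Q |f(y)|^(p y) dy + c₁ |Q|^m`
(the right-hand side average is taken as a lower Lebesgue integral in `[0,∞]`). -/
theorem key_estimate (n : ℕ) (C pplus m : ℝ) (hm : 0 < m) :
    ∃ c₁ : ℝ, 0 < c₁ ∧
      ∀ p : (Fin n → ℝ) → ℝ, Measurable p →
        (∀ x, 1 ≤ p x) → (∀ x, p x ≤ pplus) → LogHolder n C p →
        ∀ (z : Fin n → ℝ) (ℓ : ℝ), 0 < ℓ → ℓ ≤ 1 →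
          ∀ f : (Fin n → ℝ) → ℝ, IntegrableOn f (cube n z ℓ) →
            (⨍ y in cube n z ℓ, |f y|) ≤
              max 1 ((volume (cube n z ℓ)).toReal ^ (-m)) →
            ∀ x ∈ cube n z ℓ,
              ENNReal.ofReal ((⨍ y in cube n z ℓ, |f y|) ^ p x) ≤
                ENNReal.ofReal c₁ *
                  ((∫⁻ y in cube n z ℓ, ENNReal.ofReal (|f y| ^ p y)) /
                    volume (cube n z ℓ)) +
                ENNReal.ofReal c₁ *
                  ENNReal.ofReal ((volume (cube n z ℓ)).toReal ^ m) := by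
  set K := Real.exp (n * m * max C 0)
  refine ⟨K ^ 2, by positivity, fun p _ hp₁ _ hp z ℓ hℓ₀ hℓ₁ f hf hfQ x hx => ?_⟩
  set Q := cube n z ℓ
  set q := sInf (p '' Q)
  have hbdd : BddBelow (p '' Q) := ⟨1, forall_mem_image.mpr fun y _ => hp₁ y⟩
  have hq₁ : 1 ≤ q := le_csInf ((nonempty_of_mem (left_mem_cube hℓ₀.le)).image p)
    (forall_mem_image.mpr fun y _ => hp₁ y)
  have hqp : ∀ y ∈ Q, q ≤ p y := fun y hy => csInf_le hbdd (mem_image_of_mem p hy)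
  have hosc : ∀ y ∈ Q, (ℓ ^ n) ^ (m * (q - p y)) ≤ K := fun y hy =>
    Real.rpow_mul_sub_le_exp n hℓ₀ hm.le <| hp.sub_csInf_mul_log_le hbdd
      (fun _ ha _ hb => norm_sub_le_of_mem_cube hℓ₀.le ha hb) hy
  have hV : (volume Q).toReal = ℓ ^ n := by
    rw [volume_cube hℓ₀.le, ENNReal.toReal_ofReal (by positivity)]
  rw [hV] at hfQ ⊢
  rw [← setLAverage_eq]
  exact ofReal_rpow_setAverage_le measurableSet_Icc hf hq₁ hqp (hqp x hx) (by positivity)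
    (pow_le_one₀ hℓ₀.le hℓ₁) hm.le (Real.one_le_exp (by positivity)) hosc (hosc x hx) hfQ
end
end

section
/- There is a universal constant c > 0 such that for every κ ∈ [0,1], every matrix Q ∈ ℝ^{N×n} with κ + |Q| > 0, and all real exponents p(x), p(y), one has |F(x,Q) − F(y,Q)| ≤ c |p(x) − p(y)| · |ln(κ + |Q|)| · ((κ + |Q|)^{(p(x)−2)/2} + (κ + |Q|)^{(p(y)−2)/2}) · |Q|, where F(z,ξ) := (κ+|ξ|)^{(p(z)−2)/2} ξ. -/
open Set

/- Writing `a = κ + ‖Q‖`, the difference is `(a ^ s - a ^ t) • Q` with `s - t = (px - py) / 2`,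
so everything reduces to the scalar estimate `|a ^ s - a ^ t| ≤ |s - t| |log a| (a ^ s + a ^ t)`.
With `a ^ s = exp (s log a)` this follows from `1 - exp w ≤ -w`. -/

lemma Real.exp_sub_exp_le (u v : ℝ) : Real.exp u - Real.exp v ≤ (u - v) * Real.exp u := by
  have h := Real.add_one_le_exp (v - u)
  calc Real.exp u - Real.exp v = Real.exp u * (1 - Real.exp (v - u)) := by
        rw [Real.exp_sub]; field_simp
    _ ≤ Real.exp u * (u - v) :=
        mul_le_mul_of_nonneg_left (by linarith) (Real.exp_pos u).le
    _ = (u - v) * Real.exp u := mul_comm _ _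

lemma Real.abs_exp_sub_exp_le (u v : ℝ) :
    |Real.exp u - Real.exp v| ≤ |u - v| * (Real.exp u + Real.exp v) := by
  have hu := Real.exp_pos u
  have hv := Real.exp_pos v
  rw [abs_sub_le_iff]
  constructor
  · calc Real.exp u - Real.exp v ≤ (u - v) * Real.exp u := Real.exp_sub_exp_le u v
      _ ≤ |u - v| * (Real.exp u + Real.exp v) := by gcongr; exacts [le_abs_self _, by linarith]
  · calc Real.exp v - Real.exp u ≤ (v - u) * Real.exp v := Real.exp_sub_exp_le v u
      _ ≤ |u - v| * (Real.exp u + Real.exp v) := by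
        rw [abs_sub_comm]; gcongr; exacts [le_abs_self _, by linarith]

lemma Real.abs_rpow_sub_rpow_le {a : ℝ} (ha : 0 < a) (s t : ℝ) :
    |a ^ s - a ^ t| ≤ |s - t| * |Real.log a| * (a ^ s + a ^ t) := by
  simp only [Real.rpow_def_of_pos ha]
  calc |Real.exp (Real.log a * s) - Real.exp (Real.log a * t)|
      ≤ |Real.log a * s - Real.log a * t| *
          (Real.exp (Real.log a * s) + Real.exp (Real.log a * t)) :=
        Real.abs_exp_sub_exp_le _ _
    _ = |s - t| * |Real.log a| * (Real.exp (Real.log a * s) + Real.exp (Real.log a * t)) := by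
        rw [← mul_sub, abs_mul, mul_comm |Real.log a|]

/-- There is a universal constant `c > 0` such that for every `κ ∈ [0,1]`, every matrix
`Q ∈ ℝ^{N×n}` (with the Frobenius norm) with `κ + |Q| > 0`, and all real exponents
`px, py`, with `F(z,ξ) := (κ+|ξ|)^((p z - 2)/2) ξ`, one has
`|F(x,Q) - F(y,Q)| ≤ c |px - py| |ln(κ+|Q|)| ((κ+|Q|)^((px-2)/2) + (κ+|Q|)^((py-2)/2)) |Q|`. -/
theorem F_exponent_difference :
    ∃ c : ℝ, 0 < c ∧
      ∀ (N n : ℕ), ∀ κ ∈ Icc (0 : ℝ) 1,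
        ∀ Q : EuclideanSpace ℝ (Fin N × Fin n), 0 < κ + ‖Q‖ →
          ∀ px py : ℝ,
            ‖((κ + ‖Q‖) ^ ((px - 2) / 2)) • Q - ((κ + ‖Q‖) ^ ((py - 2) / 2)) • Q‖ ≤
              c * |px - py| * |Real.log (κ + ‖Q‖)| *
                ((κ + ‖Q‖) ^ ((px - 2) / 2) + (κ + ‖Q‖) ^ ((py - 2) / 2)) * ‖Q‖ := by
  refine ⟨1 / 2, one_half_pos, fun N n κ _ Q ha px py => ?_⟩
  have hexp : |(px - 2) / 2 - (py - 2) / 2| = 1 / 2 * |px - py| := by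
    rw [show (px - 2) / 2 - (py - 2) / 2 = 1 / 2 * (px - py) by ring, abs_mul,
      abs_of_pos one_half_pos]
  rw [← sub_smul, norm_smul, Real.norm_eq_abs, ← hexp]
  exact mul_le_mul_of_nonneg_right (Real.abs_rpow_sub_rpow_le ha _ _) (norm_nonneg Q)
end

section
/- Let S ⊂ ℝⁿ be measurable with 0 < |S| < ∞, let κ ∈ [0,1], and let p : S → ℝ be measurable with 1 < p⁻ ≤ p(x) ≤ p⁺ < ∞ for all x ∈ S. Then the map λ : ℝ^{N×n} → ℝ^{N×n} defined by λ(Q) := (⨍_S (κ + |Q|)^{(p(x)−2)/2} dx) · Q (with λ(0) := 0) is surjective. -/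
/-!
Writing `Q = (s / ‖R‖) • R`, solving `λ(Q) = R` amounts to solving `g s = ‖R‖` for some `s ≥ 0`,
where `g s = s * ⨍ (κ + s) ^ β` and `β = (p - 2) / 2` takes values in `[b, B]` with `b > -1`.
Since `s (κ + s) ^ β ≤ (κ + s) ^ (1 + β)`, the integrands are dominated uniformly for bounded `s`,
so `g` is continuous on `[0, ∞)` by dominated convergence. For `s ≥ max 1 κ` the base lies in
`[1, 2s]`, so `g s ≥ s (κ + s) ^ min b 0 ≥ 2 ^ min b 0 * s ^ (1 + min b 0) → ∞`. As `g 0 = 0`, the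
intermediate value theorem gives the required `s`.
-/

open MeasureTheory Set Filter Topology

theorem Function.surjective_smul_norm_of_tendsto {E : Type*} [NormedAddCommGroup E]
    [NormedSpace ℝ E] {c : ℝ → ℝ} (hc : ContinuousOn (fun s => s * c s) (Ici 0))
    (htop : Tendsto (fun s => s * c s) atTop atTop) :
    Function.Surjective fun Q : E => c ‖Q‖ • Q := by
  intro R
  rcases eq_or_ne R 0 with rfl | hR
  · exact ⟨0, by simp⟩
  have hr : 0 < ‖R‖ := norm_pos_iff.2 hR
  obtain ⟨s, hs, hsc : s * c s = ‖R‖⟩ : ‖R‖ ∈ (fun s => s * c s) '' Ici 0 :=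
    intermediate_value_Ici hc htop (by simp [hr.le])
  have hQ : ‖(s / ‖R‖) • R‖ = s := by
    rw [norm_smul, Real.norm_of_nonneg (div_nonneg hs hr.le), div_mul_cancel₀ _ hr.ne']
  refine ⟨(s / ‖R‖) • R, ?_⟩
  simp only [hQ, smul_smul]
  rw [← mul_div_assoc, mul_comm, hsc, div_self hr.ne', one_smul]

namespace Real

variable {κ β s : ℝ}

lemma mul_rpow_add_le_rpow {T B : ℝ} (hκ : 0 ≤ κ) (hs : 0 ≤ s) (hsT : s ≤ T) (hβ : -1 < β)
    (hβB : β ≤ B) : s * (κ + s) ^ β ≤ (1 + κ + T) ^ (1 + B) :=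
  calc s * (κ + s) ^ β ≤ (κ + s) * (κ + s) ^ β := by gcongr; linarith
    _ = (κ + s) ^ (1 + β) := by rw [rpow_add' (by positivity) (by linarith), rpow_one]
    _ ≤ (1 + κ + T) ^ (1 + β) := by gcongr <;> linarith
    _ ≤ (1 + κ + T) ^ (1 + B) := by gcongr; linarith

lemma continuousOn_mul_rpow_add (hκ : 0 ≤ κ) (hβ : -1 < β) :
    ContinuousOn (fun s => s * (κ + s) ^ β) (Ici 0) := by
  rcases hκ.eq_or_lt with rfl | hκ
  · have hEq : EqOn (fun s : ℝ => s ^ (1 + β)) (fun s => s * (0 + s) ^ β) (Ici 0) :=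
      fun s (hs : 0 ≤ s) => by
        dsimp only
        rw [zero_add, rpow_add' hs (by linarith), rpow_one, mul_comm]
    exact (continuousOn_id.rpow_const fun _ _ => Or.inr (by linarith)).congr hEq.symm
  · exact fun s hs => (continuousAt_id.mul ((continuousAt_const.add continuousAt_id).rpow_const
      (Or.inl (show κ + s ≠ 0 by have := mem_Ici.1 hs; positivity)))).continuousWithinAt

lemma tendsto_mul_rpow_add_atTop (hκ : 0 ≤ κ) (hβ : -1 < β) (hβ0 : β ≤ 0) :
    Tendsto (fun s => s * (κ + s) ^ β) atTop atTop := by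
  refine tendsto_atTop_mono' _ ?_
    ((tendsto_rpow_atTop (by linarith : 0 < 1 + β)).const_mul_atTop (rpow_pos_of_pos two_pos β))
  filter_upwards [eventually_ge_atTop κ, eventually_gt_atTop 0] with s hκs hs
  calc 2 ^ β * s ^ (1 + β) = s * (2 * s) ^ β := by
        rw [rpow_add hs, rpow_one, mul_rpow two_pos.le hs.le]; ring
    _ ≤ s * (κ + s) ^ β := by
        gcongr s * ?_
        exact rpow_le_rpow_of_nonpos (by linarith) (by linarith) hβ0

end Real

section IntegralMulRpow

variable {α : Type*} [MeasurableSpace α] {μ : Measure α} {β : α → ℝ} {κ b B : ℝ}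

lemma integrable_mul_rpow_add [IsFiniteMeasure μ] (hβm : AEMeasurable β μ) (hκ : 0 ≤ κ)
    (hβ : ∀ᵐ x ∂μ, b ≤ β x ∧ β x ≤ B) (hb : -1 < b) {s : ℝ} (hs : 0 ≤ s) :
    Integrable (fun x => s * (κ + s) ^ β x) μ := by
  refine (integrable_const ((1 + κ + s) ^ (1 + B))).mono'
    ((aemeasurable_const.pow hβm).const_mul s).aestronglyMeasurable ?_
  filter_upwards [hβ] with x hx
  rw [Real.norm_of_nonneg (by positivity)]
  exact Real.mul_rpow_add_le_rpow hκ hs le_rfl (by linarith [hx.1]) hx.2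

lemma continuousOn_integral_mul_rpow_add [IsFiniteMeasure μ] (hβm : AEMeasurable β μ)
    (hκ : 0 ≤ κ) (hβ : ∀ᵐ x ∂μ, b ≤ β x ∧ β x ≤ B) (hb : -1 < b) :
    ContinuousOn (fun s => ∫ x, s * (κ + s) ^ β x ∂μ) (Ici 0) := by
  intro s₀ hs₀
  have hnear : ∀ᶠ s in 𝓝[Ici 0] s₀, s ∈ Ici 0 ∩ Iio (s₀ + 1) :=
    inter_mem_nhdsWithin _ (Iio_mem_nhds (lt_add_one s₀))
  refine continuousWithinAt_of_dominated (bound := fun _ => (1 + κ + (s₀ + 1)) ^ (1 + B))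
    (hnear.mono fun s hs => (integrable_mul_rpow_add hβm hκ hβ hb hs.1).aestronglyMeasurable)
    (hnear.mono fun s hs => ?_) (integrable_const _) ?_
  · filter_upwards [hβ] with x hx
    rw [Real.norm_of_nonneg (mul_nonneg hs.1 (by have := hs.1.out; positivity))]
    exact Real.mul_rpow_add_le_rpow hκ hs.1 hs.2.le (by linarith [hx.1]) hx.2
  · filter_upwards [hβ] with x hx
    exact Real.continuousOn_mul_rpow_add hκ (by linarith [hx.1]) s₀ hs₀

lemma tendsto_integral_mul_rpow_add_atTop [IsProbabilityMeasure μ] (hβm : AEMeasurable β μ)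
    (hκ : 0 ≤ κ) (hβ : ∀ᵐ x ∂μ, b ≤ β x ∧ β x ≤ B) (hb : -1 < b) :
    Tendsto (fun s => ∫ x, s * (κ + s) ^ β x ∂μ) atTop atTop := by
  refine tendsto_atTop_mono' _ ?_
    (Real.tendsto_mul_rpow_add_atTop hκ (lt_min hb neg_one_lt_zero) (min_le_right b 0))
  filter_upwards [eventually_ge_atTop 1] with s hs
  calc s * (κ + s) ^ min b 0 = ∫ _x, s * (κ + s) ^ min b 0 ∂μ := by simp
    _ ≤ ∫ x, s * (κ + s) ^ β x ∂μ := by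
      refine integral_mono_ae (integrable_const _)
        (integrable_mul_rpow_add hβm hκ hβ hb (by linarith)) ?_
      filter_upwards [hβ] with x hx
      gcongr
      · linarith
      · exact (min_le_left b 0).trans hx.1

end IntegralMulRpow

/-- Let `S ⊂ ℝⁿ` be measurable with `0 < |S| < ∞`, `κ ∈ [0,1]`, and `p : S → ℝ` measurable
with `1 < p⁻ ≤ p(x) ≤ p⁺ < ∞` on `S`. Then the map
`λ(Q) := (⨍_S (κ + |Q|)^((p(x)-2)/2) dx) • Q` on `N × n` matrices (Frobenius norm) is
surjective. -/
theorem lambda_surjective (d N n : ℕ) (S : Set (Fin d → ℝ)) (hS : MeasurableSet S)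
    (hS0 : 0 < volume S) (hSfin : volume S < ⊤) (κ : ℝ) (hκ : κ ∈ Icc (0 : ℝ) 1)
    (p : (Fin d → ℝ) → ℝ) (hp : Measurable p) (pminus pplus : ℝ) (hpm : 1 < pminus)
    (hbd : ∀ x ∈ S, pminus ≤ p x ∧ p x ≤ pplus) :
    Function.Surjective
      (fun Q : EuclideanSpace ℝ (Fin N × Fin n) =>
        (⨍ x in S, (κ + ‖Q‖) ^ ((p x - 2) / 2)) • Q) := by
  have : IsFiniteMeasure (volume.restrict S) := isFiniteMeasure_restrict.2 hSfin.ne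
  have : NeZero (volume.restrict S) := ⟨by simpa [Measure.restrict_eq_zero] using hS0.ne'⟩
  -- `⨍ x in S, f x` is by definition `∫ x, f x ∂μ` for this probability measure `μ`
  set μ := (volume.restrict S univ)⁻¹ • volume.restrict S
  have hβ : ∀ᵐ x ∂μ, (pminus - 2) / 2 ≤ (p x - 2) / 2 ∧ (p x - 2) / 2 ≤ (pplus - 2) / 2 :=
    Measure.ae_smul_measure (ae_restrict_of_forall_mem hS fun x hx =>
      ⟨by linarith [(hbd x hx).1], by linarith [(hbd x hx).2]⟩) _
  have hβm : AEMeasurable (fun x => (p x - 2) / 2) μ := ((hp.sub_const 2).div_const 2).aemeasurable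
  have hb : -1 < (pminus - 2) / 2 := by linarith
  have hmul : ∀ s : ℝ, s * ⨍ x in S, (κ + s) ^ ((p x - 2) / 2) =
      ∫ x, s * (κ + s) ^ ((p x - 2) / 2) ∂μ := fun s => (integral_const_mul _ _).symm
  refine Function.surjective_smul_norm_of_tendsto
    (c := fun s => ⨍ x in S, (κ + s) ^ ((p x - 2) / 2)) ?_ ?_
  · simpa only [hmul] using continuousOn_integral_mul_rpow_add hβm hκ.1 hβ hb
  · simpa only [hmul] using tendsto_integral_mul_rpow_add_atTop hβm hκ.1 hβ hb
end

section
/- Let ρ be an elliptic N-function. Then there exists c ≥ 1, depending only on the characteristics of ρ, such that for all a > 0 and all 0 ≤ t ≤ a one has c⁻¹ ρ''(a) t² ≤ ρ_a(t) ≤ c ρ''(a) t², and for all a ≥ 0 and all t ≥ a one has c⁻¹ ρ(t) ≤ ρ_a(t) ≤ c ρ(t). -/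
open MeasureTheory Set Filter

noncomputable section

/-- An elliptic N-function `ρ` with (given) first and second derivatives `ρ'`, `ρ''` on
`[0,∞)` resp. `(0,∞)`, and characteristics `γ₁ ≤ γ₂`:  `ρ` is continuous, strictly
increasing and convex on `[0,∞)` with `ρ(0) = 0`, `ρ(t)/t → 0` as `t → 0⁺`,
`t/ρ(t) → 0` as `t → ∞`, `ρ` is `C¹` on `[0,∞)` and `C²` on `(0,∞)`, and
`γ₁ ρ'(t) ≤ t ρ''(t) ≤ γ₂ ρ'(t)` for all `t > 0`. -/
structure IsEllipticNFun (ρ ρ' ρ'' : ℝ → ℝ) (γ₁ γ₂ : ℝ) : Prop where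
  continuousOn : ContinuousOn ρ (Set.Ici 0)
  strictMonoOn : StrictMonoOn ρ (Set.Ici 0)
  convexOn : ConvexOn ℝ (Set.Ici 0) ρ
  map_zero : ρ 0 = 0
  tendsto_zero : Filter.Tendsto (fun t => ρ t / t) (nhdsWithin 0 (Set.Ioi 0)) (nhds 0)
  tendsto_atTop : Filter.Tendsto (fun t => t / ρ t) Filter.atTop (nhds 0)
  hasDerivAt : ∀ t ∈ Set.Ici (0:ℝ), HasDerivWithinAt ρ (ρ' t) (Set.Ici 0) t
  derivContinuousOn : ContinuousOn ρ' (Set.Ici 0)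
  hasDeriv2At : ∀ t ∈ Set.Ioi (0:ℝ), HasDerivAt ρ' (ρ'' t) t
  deriv2ContinuousOn : ContinuousOn ρ'' (Set.Ioi 0)
  gamma_pos : 0 < γ₁
  gamma_le : γ₁ ≤ γ₂
  elliptic : ∀ t ∈ Set.Ioi (0:ℝ), γ₁ * ρ' t ≤ t * ρ'' t ∧ t * ρ'' t ≤ γ₂ * ρ' t

/-- The shift of a function with derivative `g`: `shift g a t = ∫₀ᵗ (g(a+τ)/(a+τ)) τ dτ`.
For `g = ρ'` this is the shifted N-function `ρ_a`. -/
def shift (g : ℝ → ℝ) (a t : ℝ) : ℝ :=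
  ∫ τ in (0:ℝ)..t, (g (a + τ) / (a + τ)) * τ

/-- The derivative of the shifted function: `(ρ_a)'(t) = (ρ'(a+t)/(a+t)) t` for `g = ρ'`. -/
def shiftD (g : ℝ → ℝ) (a t : ℝ) : ℝ :=
  (g (a + t) / (a + t)) * t

/-- The conjugate (Legendre transform) `f*(t) = sup_{s ≥ 0} (s t - f(s))`. -/
def conj (f : ℝ → ℝ) (t : ℝ) : ℝ :=
  sSup ((fun s => s * t - f s) '' Set.Ici 0)

/-! The ellipticity bound `t ρ''(t) ≤ γ₂ ρ'(t)` makes `ρ'(t) t^(-γ₂)` decreasing, so `ρ'` is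
doubling: `ρ'(2s) ≤ 2^γ₂ ρ'(s)`. As `ρ'` is also increasing, for `0 ≤ τ ≤ t ≤ a` the factor
`ρ'(a+τ)/(a+τ)` of the integrand of `ρ_a` stays within `2^γ₂` of `ρ'(a)/a`, which is comparable
to `ρ''(a)` by ellipticity; integrating `τ` gives `ρ_a(t) ≈ ρ''(a) t²`. For `t ≥ a` the integrand
is at most `ρ'(2t) ≤ 2^γ₂ ρ'(t)` on `[0, t]` and at least `ρ'(t/2)/4` on `[t/2, t]`, so
`ρ_a(t) ≈ t ρ'(t)`, and `t ρ'(t) ≈ ρ(t)` by convexity and doubling. -/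

open intervalIntegral

lemma ConvexOn.monotoneOn_of_hasDerivWithinAt {S : Set ℝ} {f f' : ℝ → ℝ} (hfc : ConvexOn ℝ S f)
    (hf : ∀ x ∈ S, HasDerivWithinAt f (f' x) S x) : MonotoneOn f' S := by
  intro x hx y hy hxy
  rcases hxy.eq_or_lt with rfl | hxy
  · rfl
  exact (hfc.le_slope_of_hasDerivWithinAt hx hy hxy (hf x hx)).trans
    (hfc.slope_le_of_hasDerivWithinAt hx hy hxy (hf y hy))

lemma antitoneOn_mul_rpow_neg_of_mul_deriv_le {g g' : ℝ → ℝ} {γ : ℝ}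
    (hg : ∀ t ∈ Ioi (0 : ℝ), HasDerivAt g (g' t) t) (hγ : ∀ t ∈ Ioi (0 : ℝ), t * g' t ≤ γ * g t) :
    AntitoneOn (fun t => g t * t ^ (-γ)) (Ioi 0) := by
  have hderiv : ∀ t ∈ Ioi (0 : ℝ),
      HasDerivAt (fun t => g t * t ^ (-γ)) (t ^ (-γ - 1) * (t * g' t - γ * g t)) t := by
    intro t ht
    refine ((hg t ht).mul (Real.hasDerivAt_rpow_const (p := -γ) (Or.inl ht.ne'))).congr_deriv ?_
    rw [show -γ = (-γ - 1) + 1 by ring, Real.rpow_add_one ht.ne']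
    ring_nf
  refine antitoneOn_of_deriv_nonpos (convex_Ioi 0)
    (fun t ht => (hderiv t ht).continuousAt.continuousWithinAt) (fun t ht => ?_) (fun t ht => ?_)
  · rw [interior_Ioi] at ht
    exact (hderiv t ht).differentiableAt.differentiableWithinAt
  · rw [interior_Ioi] at ht
    rw [(hderiv t ht).deriv]
    exact mul_nonpos_of_nonneg_of_nonpos (Real.rpow_nonneg ht.le _)
      (sub_nonpos.2 (hγ t ht))

lemma inv_mul_le_of_le_mul_of_le {X Y K c : ℝ} (hK : 0 < K) (hKc : K ≤ c) (hX : 0 ≤ X)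
    (h : X ≤ K * Y) : c⁻¹ * X ≤ Y :=
  calc c⁻¹ * X ≤ K⁻¹ * X := mul_le_mul_of_nonneg_right (inv_anti₀ hK hKc) hX
    _ ≤ Y := by rwa [inv_mul_le_iff₀ hK]

section shift

variable {g : ℝ → ℝ} {a t : ℝ}

lemma le_shift_of_forall_le {m : ℝ} (ht : 0 ≤ t)
    (hg : IntervalIntegrable (shiftD g a) volume 0 t)
    (hm : ∀ τ ∈ Icc 0 t, m ≤ g (a + τ) / (a + τ)) : m * t ^ 2 / 2 ≤ shift g a t :=
  calc m * t ^ 2 / 2 = ∫ τ in (0 : ℝ)..t, m * τ := by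
        rw [intervalIntegral.integral_const_mul, integral_id]; ring
    _ ≤ shift g a t := integral_mono_on ht (intervalIntegrable_id.const_mul _) hg
        fun τ hτ => mul_le_mul_of_nonneg_right (hm τ hτ) hτ.1

lemma shift_le_of_forall_le {M : ℝ} (ht : 0 ≤ t)
    (hg : IntervalIntegrable (shiftD g a) volume 0 t)
    (hM : ∀ τ ∈ Icc 0 t, g (a + τ) / (a + τ) ≤ M) : shift g a t ≤ M * t ^ 2 / 2 :=
  calc shift g a t ≤ ∫ τ in (0 : ℝ)..t, M * τ :=
        integral_mono_on ht hg (intervalIntegrable_id.const_mul _)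
        fun τ hτ => mul_le_mul_of_nonneg_right (hM τ hτ) hτ.1
    _ = M * t ^ 2 / 2 := by rw [intervalIntegral.integral_const_mul, integral_id]; ring

end shift

namespace IsEllipticNFun

variable {ρ ρ' ρ'' : ℝ → ℝ} {γ₁ γ₂ : ℝ} (h : IsEllipticNFun ρ ρ' ρ'' γ₁ γ₂)
include h

lemma gamma₂_pos : 0 < γ₂ := h.gamma_pos.trans_le h.gamma_le

lemma nonneg {t : ℝ} (ht : 0 ≤ t) : 0 ≤ ρ t :=
  h.map_zero ▸ h.strictMonoOn.monotoneOn self_mem_Ici ht ht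

lemma deriv_mono {x y : ℝ} (hx : 0 ≤ x) (hxy : x ≤ y) : ρ' x ≤ ρ' y :=
  h.convexOn.monotoneOn_of_hasDerivWithinAt h.hasDerivAt hx (hx.trans hxy) hxy

lemma le_mul_deriv {t : ℝ} (ht : 0 < t) : ρ t ≤ t * ρ' t := by
  have := h.convexOn.slope_le_of_hasDerivWithinAt self_mem_Ici ht.le ht (h.hasDerivAt t ht.le)
  rwa [slope_def_field, h.map_zero, sub_zero, sub_zero, div_le_iff₀ ht, mul_comm] at this

lemma deriv_nonneg {t : ℝ} (ht : 0 < t) : 0 ≤ ρ' t :=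
  nonneg_of_mul_nonneg_right ((h.nonneg ht.le).trans (h.le_mul_deriv ht)) ht

lemma half_mul_deriv_half_le {t : ℝ} (ht : 0 < t) : t / 2 * ρ' (t / 2) ≤ ρ t := by
  have := h.convexOn.le_slope_of_hasDerivWithinAt (by positivity : (0 : ℝ) ≤ t / 2) ht.le
    (by linarith) (h.hasDerivAt (t / 2) (mem_Ici.2 (by positivity)))
  rw [slope_def_field, le_div_iff₀ (by linarith)] at this
  nlinarith [h.nonneg (by positivity : (0 : ℝ) ≤ t / 2)]

lemma deriv2_nonneg {a : ℝ} (ha : 0 < a) : 0 ≤ ρ'' a :=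
  (mul_nonneg_iff_of_pos_left ha).1
    ((mul_nonneg h.gamma_pos.le (h.deriv_nonneg ha)).trans (h.elliptic a ha).1)

lemma deriv_two_mul_le {s : ℝ} (hs : 0 < s) : ρ' (2 * s) ≤ 2 ^ γ₂ * ρ' s := by
  have hanti := antitoneOn_mul_rpow_neg_of_mul_deriv_le h.hasDeriv2At
    (fun t ht => (h.elliptic t ht).2) (mem_Ioi.2 hs)
    (mem_Ioi.2 (by positivity : 0 < 2 * s)) (by linarith)
  simp only [Real.mul_rpow zero_le_two hs.le, Real.rpow_neg zero_le_two] at hanti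
  have h2 : (0 : ℝ) < 2 ^ γ₂ := by positivity
  have hs' : 0 < s ^ (-γ₂) := by positivity
  rw [← mul_assoc] at hanti
  have := le_of_mul_le_mul_right hanti hs'
  rwa [mul_inv_le_iff₀ h2, mul_comm (ρ' s)] at this

lemma mul_deriv_le {t : ℝ} (ht : 0 < t) : t * ρ' t ≤ 2 * 2 ^ γ₂ * ρ t := by
  have hdouble := h.deriv_two_mul_le (by positivity : 0 < t / 2)
  rw [mul_div_cancel₀ t two_ne_zero] at hdouble
  calc t * ρ' t ≤ t * (2 ^ γ₂ * ρ' (t / 2)) := mul_le_mul_of_nonneg_left hdouble ht.le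
    _ = 2 * 2 ^ γ₂ * (t / 2 * ρ' (t / 2)) := by ring
    _ ≤ 2 * 2 ^ γ₂ * ρ t := mul_le_mul_of_nonneg_left (h.half_mul_deriv_half_le ht) (by positivity)

lemma shift_zero {t : ℝ} (ht : 0 ≤ t) : shift ρ' 0 t = ρ t := by
  have hae : ∀ᵐ τ : ℝ, τ ∈ uIoc 0 t → ρ' (0 + τ) / (0 + τ) * τ = ρ' τ := by
    filter_upwards [Measure.ae_ne volume 0] with τ hτ _
    rw [zero_add, div_mul_cancel₀ _ hτ]
  rw [shift, integral_congr_ae hae, integral_eq_sub_of_hasDeriv_right_of_le ht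
    (h.continuousOn.mono Icc_subset_Ici_self)
    (fun x hx => ((h.hasDerivAt x hx.1.le).hasDerivAt (Ici_mem_nhds hx.1)).hasDerivWithinAt)
    ((h.derivContinuousOn.mono (uIcc_of_le ht ▸ Icc_subset_Ici_self)).intervalIntegrable),
    h.map_zero, sub_zero]

lemma intervalIntegrable_shiftD {a u v : ℝ} (ha : 0 < a) (hu : 0 ≤ u) (hv : 0 ≤ v) :
    IntervalIntegrable (shiftD ρ' a) volume u v := by
  have hmaps : MapsTo (a + ·) (Ici 0) (Ici 0) := fun τ hτ => mem_Ici.2 (by linarith [mem_Ici.1 hτ])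
  have hcont : ContinuousOn (shiftD ρ' a) (Ici 0) :=
    ((h.derivContinuousOn.comp (by fun_prop) hmaps).div (by fun_prop)
      fun τ hτ => (by linarith [mem_Ici.1 hτ] : 0 < a + τ).ne').mul continuousOn_id
  exact (hcont.mono fun τ hτ => (le_min hu hv).trans hτ.1).intervalIntegrable

lemma shiftD_nonneg {a τ : ℝ} (ha : 0 < a) (hτ : 0 ≤ τ) : 0 ≤ shiftD ρ' a τ :=
  mul_nonneg (div_nonneg (h.deriv_nonneg (by positivity)) (by positivity)) hτ

lemma shiftD_le {a τ : ℝ} (ha : 0 < a) (hτ : 0 ≤ τ) : shiftD ρ' a τ ≤ ρ' (a + τ) := by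
  have haτ : 0 < a + τ := by positivity
  calc shiftD ρ' a τ = ρ' (a + τ) * (τ / (a + τ)) := by rw [shiftD]; ring
    _ ≤ ρ' (a + τ) * 1 :=
        mul_le_mul_of_nonneg_left ((div_le_one haτ).2 (by linarith)) (h.deriv_nonneg haτ)
    _ = ρ' (a + τ) := mul_one _

lemma deriv2_mul_sq_le_mul_shift {a t : ℝ} (ha : 0 < a) (ht : 0 ≤ t) (hta : t ≤ a) :
    ρ'' a * t ^ 2 ≤ 4 * γ₂ * shift ρ' a t := by
  have hslope : ∀ τ ∈ Icc 0 t, ρ' a / (2 * a) ≤ ρ' (a + τ) / (a + τ) := fun τ hτ =>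
    div_le_div₀ (h.deriv_nonneg (by linarith [hτ.1])) (h.deriv_mono ha.le (by linarith [hτ.1]))
      (by linarith [hτ.1]) (by linarith [hτ.2])
  have hshift := le_shift_of_forall_le ht (h.intervalIntegrable_shiftD ha le_rfl ht) hslope
  have hell : ρ'' a ≤ γ₂ * (ρ' a / a) := by
    rw [mul_div_assoc', le_div_iff₀ ha]; linarith [(h.elliptic a ha).2]
  have hγ₂ : 0 ≤ 4 * γ₂ := by linarith [h.gamma₂_pos]
  calc ρ'' a * t ^ 2 ≤ γ₂ * (ρ' a / a) * t ^ 2 := by gcongr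
    _ = 4 * γ₂ * (ρ' a / (2 * a) * t ^ 2 / 2) := by field_simp; ring
    _ ≤ 4 * γ₂ * shift ρ' a t := by gcongr

lemma shift_le_deriv2_mul_sq {a t : ℝ} (ha : 0 < a) (ht : 0 ≤ t) (hta : t ≤ a) :
    shift ρ' a t ≤ 2 ^ γ₂ / (2 * γ₁) * (ρ'' a * t ^ 2) := by
  have hslope : ∀ τ ∈ Icc 0 t, ρ' (a + τ) / (a + τ) ≤ 2 ^ γ₂ * ρ' a / a := fun τ hτ =>
    div_le_div₀ (mul_nonneg (by positivity) (h.deriv_nonneg ha))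
      ((h.deriv_mono (by linarith [hτ.1]) (by linarith [hτ.2])).trans (h.deriv_two_mul_le ha))
      ha (by linarith [hτ.1])
  have hshift := shift_le_of_forall_le ht (h.intervalIntegrable_shiftD ha le_rfl ht) hslope
  have hell : ρ' a / a ≤ ρ'' a / γ₁ := by
    rw [div_le_div_iff₀ ha h.gamma_pos]; linarith [(h.elliptic a ha).1]
  calc shift ρ' a t ≤ 2 ^ γ₂ * ρ' a / a * t ^ 2 / 2 := hshift
    _ = 2 ^ γ₂ / 2 * (ρ' a / a) * t ^ 2 := by ring
    _ ≤ 2 ^ γ₂ / 2 * (ρ'' a / γ₁) * t ^ 2 := by gcongr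
    _ = 2 ^ γ₂ / (2 * γ₁) * (ρ'' a * t ^ 2) := by field_simp

lemma shift_le_mul_deriv_add {a t : ℝ} (ha : 0 < a) (ht : 0 ≤ t) :
    shift ρ' a t ≤ t * ρ' (a + t) :=
  calc shift ρ' a t ≤ ∫ _ in (0 : ℝ)..t, ρ' (a + t) :=
        integral_mono_on ht (h.intervalIntegrable_shiftD ha le_rfl ht) intervalIntegrable_const
          fun τ hτ => (h.shiftD_le ha hτ.1).trans
            (h.deriv_mono (by linarith [hτ.1]) (by linarith [hτ.2]))
    _ = t * ρ' (a + t) := by simp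

lemma mul_deriv_half_le_shift {a t : ℝ} (ha : 0 < a) (hat : a ≤ t) :
    t * ρ' (t / 2) ≤ 8 * shift ρ' a t := by
  have ht : 0 < t := ha.trans_le hat
  have hpoint : ∀ τ ∈ Icc (t / 2) t, ρ' (t / 2) / 4 ≤ shiftD ρ' a τ := fun τ hτ => by
    have haτ : 0 < a + τ := by linarith [hτ.1]
    have hquarter : 1 / 4 ≤ τ / (a + τ) := by rw [le_div_iff₀ haτ]; linarith [hτ.1, hτ.2]
    calc ρ' (t / 2) / 4 = ρ' (t / 2) * (1 / 4) := by ring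
      _ ≤ ρ' (a + τ) * (τ / (a + τ)) :=
          mul_le_mul (h.deriv_mono (by positivity) (by linarith [hτ.1])) hquarter (by norm_num)
            (h.deriv_nonneg haτ)
      _ = shiftD ρ' a τ := by rw [shiftD]; ring
  have hnonneg : 0 ≤ᵐ[volume.restrict (Ioc 0 t)] shiftD ρ' a :=
    (ae_restrict_mem measurableSet_Ioc).mono fun τ hτ => h.shiftD_nonneg ha hτ.1.le
  calc t * ρ' (t / 2) = 8 * ∫ _ in t / 2..t, ρ' (t / 2) / 4 := by
        rw [intervalIntegral.integral_const, smul_eq_mul]; ring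
    _ ≤ 8 * ∫ τ in t / 2..t, shiftD ρ' a τ := by
        gcongr
        exact integral_mono_on (by linarith) intervalIntegrable_const
          (h.intervalIntegrable_shiftD ha (by positivity) ht.le) hpoint
    _ ≤ 8 * shift ρ' a t := by
        gcongr
        exact integral_mono_interval (by positivity) (by linarith) le_rfl hnonneg
          (h.intervalIntegrable_shiftD ha le_rfl ht.le)

lemma le_mul_shift {a t : ℝ} (ha : 0 < a) (hat : a ≤ t) : ρ t ≤ 8 * 2 ^ γ₂ * shift ρ' a t := by
  have ht : 0 < t := ha.trans_le hat
  have hdouble := h.deriv_two_mul_le (by positivity : 0 < t / 2)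
  rw [mul_div_cancel₀ t two_ne_zero] at hdouble
  calc ρ t ≤ t * ρ' t := h.le_mul_deriv ht
    _ ≤ t * (2 ^ γ₂ * ρ' (t / 2)) := mul_le_mul_of_nonneg_left hdouble ht.le
    _ = 2 ^ γ₂ * (t * ρ' (t / 2)) := by ring
    _ ≤ 2 ^ γ₂ * (8 * shift ρ' a t) :=
        mul_le_mul_of_nonneg_left (h.mul_deriv_half_le_shift ha hat) (by positivity)
    _ = 8 * 2 ^ γ₂ * shift ρ' a t := by ring

lemma shift_le_mul {a t : ℝ} (ha : 0 < a) (hat : a ≤ t) :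
    shift ρ' a t ≤ 2 * 2 ^ γ₂ * 2 ^ γ₂ * ρ t := by
  have ht : 0 < t := ha.trans_le hat
  calc shift ρ' a t ≤ t * ρ' (a + t) := h.shift_le_mul_deriv_add ha ht.le
    _ ≤ t * ρ' (2 * t) := by gcongr; exact h.deriv_mono (by positivity) (by linarith)
    _ ≤ t * (2 ^ γ₂ * ρ' t) := by gcongr; exact h.deriv_two_mul_le ht
    _ = 2 ^ γ₂ * (t * ρ' t) := by ring
    _ ≤ 2 ^ γ₂ * (2 * 2 ^ γ₂ * ρ t) := mul_le_mul_of_nonneg_left (h.mul_deriv_le ht) (by positivity)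
    _ = 2 * 2 ^ γ₂ * 2 ^ γ₂ * ρ t := by ring

end IsEllipticNFun

theorem shift_equiv_general (γ₁ γ₂ : ℝ) :
    ∃ c : ℝ, 1 ≤ c ∧
      ∀ ρ ρ' ρ'' : ℝ → ℝ, IsEllipticNFun ρ ρ' ρ'' γ₁ γ₂ →
        (∀ a : ℝ, 0 < a → ∀ t : ℝ, 0 ≤ t → t ≤ a →
          c⁻¹ * (ρ'' a * t ^ 2) ≤ shift ρ' a t ∧
            shift ρ' a t ≤ c * (ρ'' a * t ^ 2)) ∧
        (∀ a : ℝ, 0 ≤ a → ∀ t : ℝ, a ≤ t →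
          c⁻¹ * ρ t ≤ shift ρ' a t ∧ shift ρ' a t ≤ c * ρ t) := by
  set c := max 1 (max (max (4 * γ₂) (2 ^ γ₂ / (2 * γ₁))) (max (8 * 2 ^ γ₂) (2 * 2 ^ γ₂ * 2 ^ γ₂)))
  refine ⟨c, le_max_left _ _, fun ρ ρ' ρ'' h => ⟨fun a ha t ht hta => ?_, fun a ha t hat => ?_⟩⟩
  · have hnonneg : 0 ≤ ρ'' a * t ^ 2 := mul_nonneg (h.deriv2_nonneg ha) (sq_nonneg t)
    exact ⟨inv_mul_le_of_le_mul_of_le (by linarith [h.gamma₂_pos]) (by simp [c]) hnonneg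
        (h.deriv2_mul_sq_le_mul_shift ha ht hta),
      (h.shift_le_deriv2_mul_sq ha ht hta).trans
        (mul_le_mul_of_nonneg_right (by simp [c]) hnonneg)⟩
  have hρ : 0 ≤ ρ t := h.nonneg (ha.trans hat)
  rcases ha.eq_or_lt with rfl | ha
  · rw [h.shift_zero hat]
    exact ⟨inv_mul_le_of_le_mul_of_le one_pos (le_max_left _ _) hρ (one_mul _).ge,
      le_mul_of_one_le_left hρ (le_max_left _ _)⟩
  · exact ⟨inv_mul_le_of_le_mul_of_le (by positivity) (by simp [c]) hρ (h.le_mul_shift ha hat),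
      (h.shift_le_mul ha hat).trans (mul_le_mul_of_nonneg_right (by simp [c]) hρ)⟩

/-- For an elliptic N-function `ρ` there is `c ≥ 1`, depending only on the characteristics,
with `ρ_a(t) ∼ ρ''(a) t²` for `0 ≤ t ≤ a` (`a > 0`) and `ρ_a(t) ∼ ρ(t)` for `t ≥ a ≥ 0`. -/
theorem shift_equiv (γ₁ γ₂ : ℝ) (hγ₁ : 0 < γ₁) (hγ : γ₁ ≤ γ₂) :
    ∃ c : ℝ, 1 ≤ c ∧
      ∀ ρ ρ' ρ'' : ℝ → ℝ, IsEllipticNFun ρ ρ' ρ'' γ₁ γ₂ →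
        (∀ a : ℝ, 0 < a → ∀ t : ℝ, 0 ≤ t → t ≤ a →
          c⁻¹ * (ρ'' a * t ^ 2) ≤ shift ρ' a t ∧
            shift ρ' a t ≤ c * (ρ'' a * t ^ 2)) ∧
        (∀ a : ℝ, 0 ≤ a → ∀ t : ℝ, a ≤ t →
          c⁻¹ * ρ t ≤ shift ρ' a t ∧ shift ρ' a t ≤ c * ρ t) :=
  shift_equiv_general γ₁ γ₂
end
end

section
/- Let ρ be an elliptic N-function. Then there exists c ≥ 1, depending only on the characteristics of ρ, such that for all P, Q ∈ ℝ^{N×n} the three quantities (A^ρ(P) − A^ρ(Q)) : (P − Q), |F^ρ(P) − F^ρ(Q)|², and ρ_{|P|}(|P − Q|) are pairwise comparable with constant c (each is at most c times each other), and moreover, whenever |P| + |Q| > 0, each of them is comparable with constant c to ρ''(|P| + |Q|) |P − Q|². -/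
/-!
Write `φ(t) = ρ'(t) / t`, `a = |P|`, `b = |Q|`, `d = |P - Q|`; everything is compared with
`φ(a + b) d²`. The elliptic bounds make `ρ'(t) t^(-γ₁)` nondecreasing and `ρ'(t) t^(-γ₂)`
nonincreasing, so `φ` changes by a bounded factor when its argument does, and `ρ'' ≈ φ`.

Both `(A(P) - A(Q)) : (P - Q)` and `|F(P) - F(Q)|²` split into a radial part, depending only on
`a - b`, plus a multiple of the angular term `d² - (a - b)² ∈ [0, 4ab]`. For `b ≤ a` the radial
parts are `≈ φ(a) (a - b)²` by the mean value theorem for `ρ'` (on `[b, a]` if `a ≤ 2b`, on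
`[a/2, a]` otherwise). The angular coefficients are `≈ φ(a)` when `a ≤ 2b`; when `2b ≤ a` the
angular term is at most `8 (a - b)²` and is absorbed by the radial part.

The shifted function `ρ_a(d)` integrates the nondecreasing function `τ ↦ φ(a + τ) τ` over
`[0, d]`, hence lies between `φ(a + d/2) d²/4` and `φ(a + d) d²`, and `a + d ≈ a + b`.
-/

open MeasureTheory Set Filter

noncomputable section

open scoped RealInnerProductSpace

/-- `A^ρ(ξ) := (ρ'(|ξ|)/|ξ|) ξ` on `N × n` matrices with the Frobenius norm
(realized as the Euclidean norm on `ℝ^{N×n}`), with `A^ρ(0) = 0`. -/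
def Arho (N n : ℕ) (ρ' : ℝ → ℝ) (ξ : EuclideanSpace ℝ (Fin N × Fin n)) :
    EuclideanSpace ℝ (Fin N × Fin n) :=
  (ρ' ‖ξ‖ / ‖ξ‖) • ξ

/-- `F^ρ(ξ) := (ρ'(|ξ|)/|ξ|)^{1/2} ξ`, with `F^ρ(0) = 0`. -/
def Frho (N n : ℕ) (ρ' : ℝ → ℝ) (ξ : EuclideanSpace ℝ (Fin N × Fin n)) :
    EuclideanSpace ℝ (Fin N × Fin n) :=
  Real.sqrt (ρ' ‖ξ‖ / ‖ξ‖) • ξ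

/-- Two nonnegative quantities are comparable with constant `c`. -/
def Cmp (c x y : ℝ) : Prop := x ≤ c * y ∧ y ≤ c * x

namespace Cmp

variable {c c' c₁ c₂ x y z : ℝ}

theorem symm (h : Cmp c x y) : Cmp c y x := And.symm h

theorem of_le (h₁ : x ≤ c₁ * y) (h₂ : y ≤ c₂ * x) (hx : 0 ≤ x) (hy : 0 ≤ y) :
    Cmp (max c₁ c₂) x y :=
  ⟨h₁.trans (mul_le_mul_of_nonneg_right (le_max_left _ _) hy),
    h₂.trans (mul_le_mul_of_nonneg_right (le_max_right _ _) hx)⟩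

theorem nonneg (h : Cmp c x y) (hc : 0 < c) (hy : 0 ≤ y) : 0 ≤ x :=
  nonneg_of_mul_nonneg_right (hy.trans h.2) hc

theorem mono (h : Cmp c x y) (hc : 0 < c) (hy : 0 ≤ y) (hcc : c ≤ c') : Cmp c' x y :=
  ⟨h.1.trans (mul_le_mul_of_nonneg_right hcc hy),
    h.2.trans (mul_le_mul_of_nonneg_right hcc (h.nonneg hc hy))⟩

theorem trans (h₁ : Cmp c₁ x y) (h₂ : Cmp c₂ y z) (hc₁ : 0 ≤ c₁) (hc₂ : 0 ≤ c₂) :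
    Cmp (c₁ * c₂) x z := by
  constructor
  · calc x ≤ c₁ * y := h₁.1
      _ ≤ c₁ * (c₂ * z) := mul_le_mul_of_nonneg_left h₂.1 hc₁
      _ = c₁ * c₂ * z := by ring
  · calc z ≤ c₂ * y := h₂.2
      _ ≤ c₂ * (c₁ * x) := mul_le_mul_of_nonneg_left h₁.2 hc₂
      _ = c₁ * c₂ * x := by ring

end Cmp

theorem monotoneOn_mul_rpow_neg {f f' : ℝ → ℝ} {γ : ℝ}
    (hf : ∀ t ∈ Ioi (0:ℝ), HasDerivAt f (f' t) t) (hγ : ∀ t ∈ Ioi (0:ℝ), γ * f t ≤ t * f' t) :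
    MonotoneOn (fun t => f t * t ^ (-γ)) (Ioi 0) := by
  have hderiv : ∀ t ∈ Ioi (0:ℝ), HasDerivAt (fun t => f t * t ^ (-γ))
      (f' t * t ^ (-γ) + f t * (-γ * t ^ (-γ - 1))) t := fun t ht =>
    (hf t ht).mul (Real.hasDerivAt_rpow_const (Or.inl (ne_of_gt ht)))
  refine monotoneOn_of_hasDerivWithinAt_nonneg (convex_Ioi 0)
    (fun t ht => (hderiv t ht).continuousAt.continuousWithinAt)
    (fun t ht => (hderiv t (interior_subset ht)).hasDerivWithinAt) (fun t ht => ?_)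
  rw [interior_Ioi] at ht
  have hpow : t ^ (-γ) = t ^ (-γ - 1) * t := by
    rw [← Real.rpow_add_one (ne_of_gt ht)]; ring_nf
  rw [hpow]
  nlinarith [hγ t ht, Real.rpow_nonneg (le_of_lt ht) (-γ - 1)]

theorem intervalIntegral_le_mul_of_monotoneOn {f : ℝ → ℝ} {d : ℝ} (hd : 0 ≤ d)
    (hf : MonotoneOn f (Icc 0 d)) : ∫ τ in (0:ℝ)..d, f τ ≤ d * f d := by
  have hint : IntervalIntegrable f volume 0 d :=
    MonotoneOn.intervalIntegrable (by rwa [uIcc_of_le hd])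
  calc ∫ τ in (0:ℝ)..d, f τ ≤ ∫ _ in (0:ℝ)..d, f d :=
        intervalIntegral.integral_mono_on hd hint intervalIntegrable_const
          fun τ hτ => hf hτ (right_mem_Icc.2 hd) hτ.2
    _ = d * f d := by simp

theorem mul_le_intervalIntegral_of_monotoneOn {f : ℝ → ℝ} {d : ℝ} (hd : 0 ≤ d)
    (hf : MonotoneOn f (Icc 0 d)) (hf₀ : 0 ≤ f 0) :
    d / 2 * f (d / 2) ≤ ∫ τ in (0:ℝ)..d, f τ := by
  have hmid : d / 2 ∈ Icc 0 d := ⟨by linarith, by linarith⟩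
  have hint₁ : IntervalIntegrable f volume 0 (d / 2) := MonotoneOn.intervalIntegrable
    (hf.mono (by rw [uIcc_of_le hmid.1]; exact Icc_subset_Icc_right hmid.2))
  have hint₂ : IntervalIntegrable f volume (d / 2) d := MonotoneOn.intervalIntegrable
    (hf.mono (by rw [uIcc_of_le hmid.2]; exact Icc_subset_Icc_left hmid.1))
  rw [← intervalIntegral.integral_add_adjacent_intervals hint₁ hint₂]
  have hfirst : 0 ≤ ∫ τ in (0:ℝ)..(d / 2), f τ :=
    intervalIntegral.integral_nonneg hmid.1 fun τ hτ =>
      hf₀.trans (hf (left_mem_Icc.2 hd) ⟨hτ.1, hτ.2.trans hmid.2⟩ hτ.1)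
  have hsecond : ∫ _ in (d / 2)..d, f (d / 2) ≤ ∫ τ in (d / 2)..d, f τ :=
    intervalIntegral.integral_mono_on hmid.2 intervalIntegrable_const hint₂
      fun τ hτ => hf hmid ⟨hmid.1.trans hτ.1, hτ.2⟩ hτ.1
  simp only [intervalIntegral.integral_const, smul_eq_mul] at hsecond
  linarith

theorem sq_norm_sub_sub_sq_mem_Icc {E : Type*} [SeminormedAddCommGroup E] (P Q : E) :
    ‖P - Q‖ ^ 2 - (‖P‖ - ‖Q‖) ^ 2 ∈ Icc 0 (4 * ‖P‖ * ‖Q‖) := by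
  constructor
  · rw [sub_nonneg, sq_le_sq, abs_norm]; exact abs_norm_sub_norm_le P Q
  · nlinarith [pow_le_pow_left₀ (norm_nonneg _) (norm_sub_le P Q) 2]

section InnerProductSpace

variable {E : Type*} [NormedAddCommGroup E] [InnerProductSpace ℝ E]

theorem inner_smul_sub_smul_sub_self (α β : ℝ) (P Q : E) :
    ⟪α • P - β • Q, P - Q⟫ = (α * ‖P‖ - β * ‖Q‖) * (‖P‖ - ‖Q‖) +
      (α + β) / 2 * (‖P - Q‖ ^ 2 - (‖P‖ - ‖Q‖) ^ 2) := by
  rw [norm_sub_sq_real, inner_sub_left, inner_sub_right, inner_sub_right, real_inner_smul_left,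
    real_inner_smul_left, real_inner_smul_left, real_inner_smul_left,
    real_inner_self_eq_norm_sq, real_inner_self_eq_norm_sq, real_inner_comm Q P]
  ring

theorem norm_smul_sub_smul_sq {α β : ℝ} (hα : 0 ≤ α) (hβ : 0 ≤ β) (P Q : E) :
    ‖α • P - β • Q‖ ^ 2 = (α * ‖P‖ - β * ‖Q‖) ^ 2 +
      α * β * (‖P - Q‖ ^ 2 - (‖P‖ - ‖Q‖) ^ 2) := by
  rw [norm_sub_sq_real, norm_sub_sq_real P Q, norm_smul, norm_smul, real_inner_smul_left,
    real_inner_smul_right, Real.norm_of_nonneg hα, Real.norm_of_nonneg hβ]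
  ring

end InnerProductSpace

namespace IsEllipticNFun

variable {ρ ρ' ρ'' : ℝ → ℝ} {γ₁ γ₂ : ℝ}

theorem gamma₂_pos_s12 (h : IsEllipticNFun ρ ρ' ρ'' γ₁ γ₂) : 0 < γ₂ :=
  h.gamma_pos.trans_le h.gamma_le

theorem deriv_nonneg_s12 (h : IsEllipticNFun ρ ρ' ρ'' γ₁ γ₂) {t : ℝ} (ht : 0 ≤ t) : 0 ≤ ρ' t := by
  have hsub : Ioi t ⊆ Ici 0 := fun x hx => ht.trans (le_of_lt hx)
  refine ((h.hasDerivAt t ht).mono hsub).nonneg_of_monotoneOn ?_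
    (h.strictMonoOn.monotoneOn.mono hsub)
  rw [accPt_principal_iff_nhdsWithin, sdiff_singleton_eq_self (s := Ioi t) (lt_irrefl t)]
  infer_instance

theorem deriv_zero (h : IsEllipticNFun ρ ρ' ρ'' γ₁ γ₂) : ρ' 0 = 0 := by
  have hd := (h.hasDerivAt 0 self_mem_Ici).mono (Ioi_subset_Ici_self : Ioi (0:ℝ) ⊆ Ici 0)
  rw [hasDerivWithinAt_iff_tendsto_slope' (by simp)] at hd
  refine tendsto_nhds_unique hd (h.tendsto_zero.congr' ?_)
  filter_upwards with t
  rw [slope_def_field, h.map_zero, sub_zero, sub_zero]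

theorem rpow_mul_deriv_le (h : IsEllipticNFun ρ ρ' ρ'' γ₁ γ₂) {s t : ℝ} (hs : 0 < s)
    (hst : s ≤ t) : (t / s) ^ γ₁ * ρ' s ≤ ρ' t := by
  have := monotoneOn_mul_rpow_neg h.hasDeriv2At (fun t ht => (h.elliptic t ht).1) hs
    (hs.trans_le hst) hst
  simp only [Real.rpow_neg hs.le, Real.rpow_neg (hs.le.trans hst)] at this
  rw [Real.div_rpow (hs.le.trans hst) hs.le]
  have ht' := Real.rpow_pos_of_pos (hs.trans_le hst) γ₁
  calc t ^ γ₁ / s ^ γ₁ * ρ' s = ρ' s * (s ^ γ₁)⁻¹ * t ^ γ₁ := by ring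
    _ ≤ ρ' t * (t ^ γ₁)⁻¹ * t ^ γ₁ := mul_le_mul_of_nonneg_right this ht'.le
    _ = ρ' t := by field_simp

theorem deriv_le_rpow_mul (h : IsEllipticNFun ρ ρ' ρ'' γ₁ γ₂) {s t : ℝ} (hs : 0 < s)
    (hst : s ≤ t) : ρ' t ≤ (t / s) ^ γ₂ * ρ' s := by
  have := monotoneOn_mul_rpow_neg (f := fun t => -ρ' t) (γ := γ₂)
    (fun t ht => (h.hasDeriv2At t ht).neg)
    (fun t ht => by linarith [(h.elliptic t ht).2]) hs (hs.trans_le hst) hst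
  simp only [Real.rpow_neg hs.le, Real.rpow_neg (hs.le.trans hst)] at this
  rw [Real.div_rpow (hs.le.trans hst) hs.le]
  have ht' := Real.rpow_pos_of_pos (hs.trans_le hst) γ₂
  calc ρ' t = ρ' t * (t ^ γ₂)⁻¹ * t ^ γ₂ := by field_simp
    _ ≤ ρ' s * (s ^ γ₂)⁻¹ * t ^ γ₂ := mul_le_mul_of_nonneg_right (by linarith) ht'.le
    _ = t ^ γ₂ / s ^ γ₂ * ρ' s := by ring

theorem deriv_mono_s12 (h : IsEllipticNFun ρ ρ' ρ'' γ₁ γ₂) {s t : ℝ} (hs : 0 ≤ s) (hst : s ≤ t) :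
    ρ' s ≤ ρ' t := by
  rcases hs.eq_or_lt with rfl | hs
  · rw [h.deriv_zero]; exact h.deriv_nonneg_s12 hst
  calc ρ' s ≤ (t / s) ^ γ₁ * ρ' s :=
        le_mul_of_one_le_left (h.deriv_nonneg_s12 hs.le)
          (Real.one_le_rpow ((one_le_div hs).2 hst) h.gamma_pos.le)
    _ ≤ ρ' t := h.rpow_mul_deriv_le hs hst

theorem deriv_div_mul_self (h : IsEllipticNFun ρ ρ' ρ'' γ₁ γ₂) (t : ℝ) : ρ' t / t * t = ρ' t := by
  rcases eq_or_ne t 0 with rfl | ht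
  · rw [h.deriv_zero, zero_div, zero_mul]
  · exact div_mul_cancel₀ _ ht

theorem deriv_le_of_le_mul (h : IsEllipticNFun ρ ρ' ρ'' γ₁ γ₂) {s t K : ℝ} (hs : 0 < s)
    (ht : 0 ≤ t) (htK : t ≤ K * s) (hK : 1 ≤ K) : ρ' t ≤ K ^ γ₂ * ρ' s := by
  rcases le_total t s with hts | hst
  · exact (h.deriv_mono_s12 ht hts).trans
      (le_mul_of_one_le_left (h.deriv_nonneg_s12 hs.le) (Real.one_le_rpow hK h.gamma₂_pos_s12.le))
  · calc ρ' t ≤ (t / s) ^ γ₂ * ρ' s := h.deriv_le_rpow_mul hs hst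
      _ ≤ K ^ γ₂ * ρ' s := mul_le_mul_of_nonneg_right
          (Real.rpow_le_rpow (by positivity) ((div_le_iff₀ hs).2 htK) h.gamma₂_pos_s12.le)
          (h.deriv_nonneg_s12 hs.le)

theorem deriv_div_le (h : IsEllipticNFun ρ ρ' ρ'' γ₁ γ₂) {s t K : ℝ} (hs : 0 < s) (ht : 0 < t)
    (htK : t ≤ K * s) (hsK : s ≤ K * t) (hK : 1 ≤ K) :
    ρ' t / t ≤ K ^ γ₂ * K * (ρ' s / s) := by
  have hρ := h.deriv_le_of_le_mul hs ht.le htK hK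
  have hinv : t⁻¹ ≤ K * s⁻¹ := by
    rw [← div_eq_mul_inv, ← one_div, div_le_div_iff₀ ht hs]; linarith
  calc ρ' t / t = ρ' t * t⁻¹ := div_eq_mul_inv _ _
    _ ≤ (K ^ γ₂ * ρ' s) * (K * s⁻¹) :=
        mul_le_mul hρ hinv (inv_nonneg.2 ht.le)
          (mul_nonneg (Real.rpow_nonneg (by linarith) _) (h.deriv_nonneg_s12 hs.le))
    _ = K ^ γ₂ * K * (ρ' s / s) := by ring

theorem deriv_sub_mem_Icc (h : IsEllipticNFun ρ ρ' ρ'' γ₁ γ₂) {s t : ℝ} (hs : 0 < s)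
    (hst : s ≤ t) :
    ρ' t - ρ' s ∈ Icc (γ₁ * (ρ' s / t) * (t - s)) (γ₂ * (ρ' t / s) * (t - s)) := by
  rcases hst.eq_or_lt with rfl | hlt
  · simp
  obtain ⟨ξ, ⟨hsξ, hξt⟩, hslope⟩ := exists_hasDerivAt_eq_slope ρ' ρ'' hlt
    (h.derivContinuousOn.mono fun x hx => hs.le.trans hx.1)
    (fun x hx => h.hasDeriv2At x (hs.trans hx.1))
  have hξ : 0 < ξ := hs.trans hsξ
  have hdiff : ρ' t - ρ' s = ρ'' ξ * (t - s) := by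
    rw [hslope, div_mul_cancel₀ _ (sub_ne_zero.2 hlt.ne')]
  obtain ⟨hlow, hupp⟩ := h.elliptic ξ hξ
  rw [hdiff]
  constructor
  · refine mul_le_mul_of_nonneg_right ?_ (sub_nonneg.2 hst)
    calc γ₁ * (ρ' s / t) ≤ γ₁ * (ρ' ξ / ξ) := by
          gcongr
          · exact h.gamma_pos.le
          · exact h.deriv_nonneg_s12 hξ.le
          · exact h.deriv_mono_s12 hs.le hsξ.le
      _ ≤ ρ'' ξ := by rw [← mul_div_assoc, div_le_iff₀ hξ]; linarith
  · refine mul_le_mul_of_nonneg_right ?_ (sub_nonneg.2 hst)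
    calc ρ'' ξ ≤ γ₂ * (ρ' ξ / ξ) := by rw [← mul_div_assoc, le_div_iff₀ hξ]; linarith
      _ ≤ γ₂ * (ρ' t / s) := by
          gcongr
          · exact h.gamma₂_pos_s12.le
          · exact h.deriv_nonneg_s12 (hs.le.trans hst)
          · exact h.deriv_mono_s12 hξ.le hξt.le

theorem mul_sub_le_deriv_sub_of_le_two_mul (h : IsEllipticNFun ρ ρ' ρ'' γ₁ γ₂) {s a : ℝ}
    (hs : 0 < s) (hsa : s ≤ a) (has : a ≤ 2 * s) :
    ρ' a / a * (a - s) ≤ 2 ^ γ₂ / γ₁ * (ρ' a - ρ' s) := by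
  have ha : 0 < a := hs.trans_le hsa
  have hρ : ρ' a ≤ 2 ^ γ₂ * ρ' s := h.deriv_le_of_le_mul hs ha.le has one_le_two
  have hmvt := (h.deriv_sub_mem_Icc hs hsa).1
  calc ρ' a / a * (a - s) ≤ 2 ^ γ₂ * ρ' s / a * (a - s) := by gcongr
    _ = 2 ^ γ₂ / γ₁ * (γ₁ * (ρ' s / a) * (a - s)) := by field_simp [h.gamma_pos.ne']
    _ ≤ 2 ^ γ₂ / γ₁ * (ρ' a - ρ' s) := by
        gcongr
        exact div_nonneg (by positivity) h.gamma_pos.le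

theorem mul_sub_le_deriv_sub (h : IsEllipticNFun ρ ρ' ρ'' γ₁ γ₂) {a b : ℝ} (ha : 0 < a)
    (hb : 0 ≤ b) (hba : b ≤ a) : ρ' a / a * (a - b) ≤ 2 * 2 ^ γ₂ / γ₁ * (ρ' a - ρ' b) := by
  have hc : 0 ≤ 2 ^ γ₂ / γ₁ := div_nonneg (by positivity) h.gamma_pos.le
  rcases le_total a (2 * b) with hnear | hfar
  · have key := h.mul_sub_le_deriv_sub_of_le_two_mul (by linarith) hba hnear
    have := h.deriv_mono_s12 hb hba
    calc ρ' a / a * (a - b) ≤ 2 ^ γ₂ / γ₁ * (ρ' a - ρ' b) := key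
      _ ≤ 2 * 2 ^ γ₂ / γ₁ * (ρ' a - ρ' b) := by
        rw [mul_div_assoc]; nlinarith [mul_nonneg hc (sub_nonneg.2 this)]
  · have key := h.mul_sub_le_deriv_sub_of_le_two_mul (half_pos ha) (half_le_self ha.le)
      (by linarith)
    have hmono := h.deriv_mono_s12 hb (by linarith : b ≤ a / 2)
    have hφ : 0 ≤ ρ' a / a := div_nonneg (h.deriv_nonneg_s12 ha.le) ha.le
    calc ρ' a / a * (a - b) ≤ 2 * (ρ' a / a * (a - a / 2)) := by nlinarith
      _ ≤ 2 * (2 ^ γ₂ / γ₁ * (ρ' a - ρ' (a / 2))) := by gcongr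
      _ ≤ 2 * 2 ^ γ₂ / γ₁ * (ρ' a - ρ' b) := by
        rw [mul_div_assoc]
        nlinarith [mul_le_mul_of_nonneg_left (by linarith : ρ' a - ρ' (a / 2) ≤ ρ' a - ρ' b) hc]

theorem deriv_sub_le_mul_sub (h : IsEllipticNFun ρ ρ' ρ'' γ₁ γ₂) {a b : ℝ} (ha : 0 < a)
    (hb : 0 ≤ b) (hba : b ≤ a) : ρ' a - ρ' b ≤ 2 * (γ₂ + 1) * (ρ' a / a) * (a - b) := by
  have hφ : 0 ≤ ρ' a / a := div_nonneg (h.deriv_nonneg_s12 ha.le) ha.le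
  have hφa : ρ' a / a * a = ρ' a := div_mul_cancel₀ _ ha.ne'
  have hγ₂ := h.gamma₂_pos_s12
  rcases le_total a (2 * b) with hnear | hfar
  · have hb0 : 0 < b := by linarith
    have hratio : ρ' a / b ≤ 2 * (ρ' a / a) := by
      rw [div_le_iff₀ hb0]; nlinarith
    calc ρ' a - ρ' b ≤ γ₂ * (ρ' a / b) * (a - b) := (h.deriv_sub_mem_Icc hb0 hba).2
      _ ≤ γ₂ * (2 * (ρ' a / a)) * (a - b) := by gcongr
      _ ≤ 2 * (γ₂ + 1) * (ρ' a / a) * (a - b) := by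
        nlinarith [mul_nonneg hφ (sub_nonneg.2 hba)]
  · have := h.deriv_nonneg_s12 hb
    nlinarith [mul_nonneg hφ (sub_nonneg.2 hba), mul_nonneg hφ hb]

theorem monotoneOn_shiftD (h : IsEllipticNFun ρ ρ' ρ'' γ₁ γ₂) {a : ℝ} (ha : 0 ≤ a) :
    MonotoneOn (shiftD ρ' a) (Ici 0) := by
  intro x hx y hy hxy
  have hfrac : x / (a + x) ≤ y / (a + y) := by
    rcases (add_nonneg ha hx).eq_or_lt with hax | hax
    · rw [← hax, div_zero]; exact div_nonneg hy (add_nonneg ha hy)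
    · rw [div_le_div_iff₀ hax (by linarith)]; nlinarith
  calc shiftD ρ' a x = ρ' (a + x) * (x / (a + x)) := by unfold shiftD; ring
    _ ≤ ρ' (a + y) * (y / (a + y)) :=
        mul_le_mul (h.deriv_mono_s12 (add_nonneg ha hx) (by linarith)) hfrac
          (div_nonneg hx (add_nonneg ha hx)) (h.deriv_nonneg_s12 (add_nonneg ha hy))
    _ = shiftD ρ' a y := by unfold shiftD; ring

theorem shift_le (h : IsEllipticNFun ρ ρ' ρ'' γ₁ γ₂) {a d : ℝ} (ha : 0 ≤ a) (hd : 0 ≤ d) :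
    shift ρ' a d ≤ ρ' (a + d) / (a + d) * d ^ 2 :=
  (intervalIntegral_le_mul_of_monotoneOn hd
    ((h.monotoneOn_shiftD ha).mono Icc_subset_Ici_self)).trans_eq (by unfold shiftD; ring)

theorem le_shift (h : IsEllipticNFun ρ ρ' ρ'' γ₁ γ₂) {a d : ℝ} (ha : 0 ≤ a) (hd : 0 < d) :
    ρ' (a + d) / (a + d) * d ^ 2 ≤ 8 * 2 ^ γ₂ * shift ρ' a d := by
  have hlow := mul_le_intervalIntegral_of_monotoneOn hd.le
    ((h.monotoneOn_shiftD ha).mono Icc_subset_Ici_self) (by simp [shiftD])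
  have hφ := h.deriv_div_le (s := a + d / 2) (t := a + d) (K := 2) (by linarith) (by linarith)
    (by linarith) (by linarith) one_le_two
  change d / 2 * shiftD ρ' a (d / 2) ≤ shift ρ' a d at hlow
  unfold shiftD at hlow
  calc ρ' (a + d) / (a + d) * d ^ 2 ≤ 2 ^ γ₂ * 2 * (ρ' (a + d / 2) / (a + d / 2)) * d ^ 2 :=
        mul_le_mul_of_nonneg_right hφ (sq_nonneg d)
    _ = 8 * 2 ^ γ₂ * (d / 2 * (ρ' (a + d / 2) / (a + d / 2) * (d / 2))) := by ring
    _ ≤ 8 * 2 ^ γ₂ * shift ρ' a d := by gcongr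

theorem cmp_shift (h : IsEllipticNFun ρ ρ' ρ'' γ₁ γ₂) {a b d : ℝ} (ha : 0 ≤ a) (hb : 0 ≤ b)
    (hd : 0 ≤ d) (hbd : b ≤ a + d) (hdab : d ≤ a + b) :
    Cmp (16 * (2 ^ γ₂) ^ 2) (shift ρ' a d) (ρ' (a + b) / (a + b) * d ^ 2) := by
  rcases hd.eq_or_lt with rfl | hd
  · simp [Cmp, shift]
  have hκ : (1:ℝ) ≤ 2 ^ γ₂ := Real.one_le_rpow one_le_two h.gamma₂_pos_s12.le
  have hφ₁ := h.deriv_div_le (s := a + b) (t := a + d) (K := 2) (by linarith) (by linarith)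
    (by linarith) (by linarith) one_le_two
  have hφ₂ := h.deriv_div_le (s := a + d) (t := a + b) (K := 2) (by linarith) (by linarith)
    (by linarith) (by linarith) one_le_two
  have hΦ : 0 ≤ ρ' (a + b) / (a + b) * d ^ 2 :=
    mul_nonneg (div_nonneg (h.deriv_nonneg_s12 (by linarith)) (by linarith)) (sq_nonneg d)
  have hup := h.shift_le ha hd.le
  have hlow := h.le_shift ha hd
  constructor
  · calc shift ρ' a d ≤ ρ' (a + d) / (a + d) * d ^ 2 := hup
      _ ≤ 2 ^ γ₂ * 2 * (ρ' (a + b) / (a + b)) * d ^ 2 :=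
          mul_le_mul_of_nonneg_right hφ₁ (sq_nonneg d)
      _ ≤ 16 * (2 ^ γ₂) ^ 2 * (ρ' (a + b) / (a + b) * d ^ 2) := by
          rw [mul_assoc]; exact mul_le_mul_of_nonneg_right (by nlinarith) hΦ
  · calc ρ' (a + b) / (a + b) * d ^ 2 ≤ 2 ^ γ₂ * 2 * (ρ' (a + d) / (a + d)) * d ^ 2 :=
          mul_le_mul_of_nonneg_right hφ₂ (sq_nonneg d)
      _ = 2 ^ γ₂ * 2 * (ρ' (a + d) / (a + d) * d ^ 2) := by ring
      _ ≤ 2 ^ γ₂ * 2 * (8 * 2 ^ γ₂ * shift ρ' a d) := by gcongr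
      _ = 16 * (2 ^ γ₂) ^ 2 * shift ρ' a d := by ring

theorem deriv_div_mul_le (h : IsEllipticNFun ρ ρ' ρ'' γ₁ γ₂) {a b e : ℝ} (ha : 0 < a)
    (hb : 0 ≤ b) (hba : b ≤ a) (he : 0 ≤ e) (he' : e ≤ 4 * a * b) :
    ρ' b / b * e ≤ 16 * (ρ' a / a) * ((a - b) ^ 2 + e) := by
  have hφa : 0 ≤ ρ' a / a := div_nonneg (h.deriv_nonneg_s12 ha.le) ha.le
  have hφb : 0 ≤ ρ' b / b := div_nonneg (h.deriv_nonneg_s12 hb) hb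
  have hmono := h.deriv_mono_s12 hb hba
  rcases le_total a (2 * b) with hnear | hfar
  · have hb0 : 0 < b := by linarith
    have hratio : ρ' b / b ≤ 2 * (ρ' a / a) := by
      rw [div_le_iff₀ hb0]
      nlinarith [div_mul_cancel₀ (ρ' a) ha.ne']
    nlinarith [mul_le_mul_of_nonneg_right hratio he, mul_nonneg hφa (sq_nonneg (a - b)),
      mul_nonneg hφa he]
  · calc ρ' b / b * e ≤ ρ' b / b * (4 * a * b) := mul_le_mul_of_nonneg_left he' hφb
      _ = 4 * a * ρ' b := by linear_combination (4 * a) * h.deriv_div_mul_self b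
      _ ≤ 4 * a * ρ' a := by gcongr
      _ = 4 * (ρ' a / a) * a ^ 2 := by field_simp
      _ ≤ 16 * (ρ' a / a) * ((a - b) ^ 2 + e) := by
        nlinarith [mul_le_mul_of_nonneg_left (by nlinarith : a ^ 2 ≤ 4 * (a - b) ^ 2) hφa,
          mul_nonneg hφa he]

theorem deriv_div_mul_le_sqrt (h : IsEllipticNFun ρ ρ' ρ'' γ₁ γ₂) {a b e : ℝ} (ha : 0 < a)
    (hb : 0 ≤ b) (hba : b ≤ a) (he : 0 ≤ e) (he' : e ≤ 4 * a * b) :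
    ρ' a / a * e ≤ 8 * (ρ' a / a) * (a - b) ^ 2 + 2 ^ γ₂ * (√(ρ' a / a) * √(ρ' b / b)) * e := by
  have hφa : 0 ≤ ρ' a / a := div_nonneg (h.deriv_nonneg_s12 ha.le) ha.le
  have hS : 0 ≤ 2 ^ γ₂ * (√(ρ' a / a) * √(ρ' b / b)) * e := by positivity
  rcases le_total a (2 * b) with hnear | hfar
  · have hb0 : 0 < b := by linarith
    have hκ : (1:ℝ) ≤ 2 ^ γ₂ := Real.one_le_rpow one_le_two h.gamma₂_pos_s12.le
    have hφ : ρ' a / a ≤ 2 ^ γ₂ * (ρ' b / b) := by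
      have hρ := h.deriv_le_of_le_mul hb0 ha.le hnear one_le_two
      calc ρ' a / a ≤ 2 ^ γ₂ * ρ' b / a := by gcongr
        _ ≤ 2 ^ γ₂ * ρ' b / b := by
          gcongr
          exact mul_nonneg (by positivity) (h.deriv_nonneg_s12 hb)
        _ = 2 ^ γ₂ * (ρ' b / b) := mul_div_assoc _ _ _
    have hsqrt : √(ρ' a / a) ≤ 2 ^ γ₂ * √(ρ' b / b) :=
      calc √(ρ' a / a) ≤ √(2 ^ γ₂) * √(ρ' b / b) := by
            rw [← Real.sqrt_mul (by positivity)]; exact Real.sqrt_le_sqrt hφ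
        _ ≤ 2 ^ γ₂ * √(ρ' b / b) := by
            gcongr; exact Real.sqrt_le_self_iff.2 (Or.inr hκ)
    have : ρ' a / a ≤ 2 ^ γ₂ * (√(ρ' a / a) * √(ρ' b / b)) := by
      calc ρ' a / a = √(ρ' a / a) * √(ρ' a / a) := (Real.mul_self_sqrt hφa).symm
        _ ≤ √(ρ' a / a) * (2 ^ γ₂ * √(ρ' b / b)) := by gcongr
        _ = 2 ^ γ₂ * (√(ρ' a / a) * √(ρ' b / b)) := by ring
    nlinarith [mul_le_mul_of_nonneg_right this he, mul_nonneg hφa (sq_nonneg (a - b))]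
  · have : e ≤ 8 * (a - b) ^ 2 := by nlinarith
    nlinarith [mul_le_mul_of_nonneg_left this hφa]

theorem sq_sqrt_deriv_div_mul_self (h : IsEllipticNFun ρ ρ' ρ'' γ₁ γ₂) {t : ℝ} (ht : 0 ≤ t) :
    (√(ρ' t / t) * t) ^ 2 = ρ' t * t := by
  rw [mul_pow, Real.sq_sqrt (div_nonneg (h.deriv_nonneg_s12 ht) ht)]
  linear_combination t * h.deriv_div_mul_self t

theorem sqrt_deriv_div_mul_le (h : IsEllipticNFun ρ ρ' ρ'' γ₁ γ₂) {a b : ℝ} (hb : 0 ≤ b)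
    (hba : b ≤ a) : √(ρ' b / b) * b ≤ √(ρ' a / a) * a := by
  refine (pow_le_pow_iff_left₀ (mul_nonneg (Real.sqrt_nonneg _) hb)
    (mul_nonneg (Real.sqrt_nonneg _) (hb.trans hba)) two_ne_zero).1 ?_
  rw [h.sq_sqrt_deriv_div_mul_self hb, h.sq_sqrt_deriv_div_mul_self (hb.trans hba)]
  exact mul_le_mul (h.deriv_mono_s12 hb hba) hba hb (h.deriv_nonneg_s12 (hb.trans hba))

theorem sqrt_mul_sub_sqrt_mul_le (h : IsEllipticNFun ρ ρ' ρ'' γ₁ γ₂) {a b : ℝ} (ha : 0 < a)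
    (hb : 0 ≤ b) (hba : b ≤ a) :
    √(ρ' a / a) * a - √(ρ' b / b) * b ≤ (2 * (γ₂ + 1) + 1) * √(ρ' a / a) * (a - b) := by
  set x := √(ρ' a / a) * a
  set y := √(ρ' b / b) * b
  have hx2 : x ^ 2 = ρ' a * a := h.sq_sqrt_deriv_div_mul_self ha.le
  have hy2 : y ^ 2 = ρ' b * b := h.sq_sqrt_deriv_div_mul_self hb
  have hy : 0 ≤ y := mul_nonneg (Real.sqrt_nonneg _) hb
  have hyx : y ≤ x := h.sqrt_deriv_div_mul_le hb hba
  have hρa : ρ' a = √(ρ' a / a) * x := by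
    rw [← mul_assoc, Real.mul_self_sqrt (div_nonneg (h.deriv_nonneg_s12 ha.le) ha.le),
      div_mul_cancel₀ _ ha.ne']
  have hrad := h.deriv_sub_le_mul_sub ha hb hba
  have hR : 0 ≤ (2 * (γ₂ + 1) + 1) * √(ρ' a / a) * (a - b) := by
    have := h.gamma₂_pos_s12; have := sub_nonneg.2 hba; positivity
  have key : x * (x - y) ≤ x * ((2 * (γ₂ + 1) + 1) * √(ρ' a / a) * (a - b)) := by
    have hsplit : x ^ 2 - y ^ 2 = (ρ' a - ρ' b) * a + ρ' b * (a - b) := by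
      rw [hx2, hy2]; ring
    have h1 : (ρ' a - ρ' b) * a ≤ 2 * (γ₂ + 1) * ρ' a * (a - b) := by
      calc (ρ' a - ρ' b) * a ≤ 2 * (γ₂ + 1) * (ρ' a / a) * (a - b) * a :=
            mul_le_mul_of_nonneg_right hrad ha.le
        _ = 2 * (γ₂ + 1) * ρ' a * (a - b) := by field_simp
    have h2 : ρ' b * (a - b) ≤ ρ' a * (a - b) :=
      mul_le_mul_of_nonneg_right (h.deriv_mono_s12 hb hba) (sub_nonneg.2 hba)
    calc x * (x - y) ≤ x ^ 2 - y ^ 2 := by nlinarith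
      _ ≤ (2 * (γ₂ + 1) + 1) * ρ' a * (a - b) := by linarith
      _ = x * ((2 * (γ₂ + 1) + 1) * √(ρ' a / a) * (a - b)) := by
          linear_combination ((2 * (γ₂ + 1) + 1) * (a - b)) * hρa
  rcases (hy.trans hyx).eq_or_lt with hx0 | hx0
  · rw [← hx0] at hyx ⊢; linarith
  · exact le_of_mul_le_mul_left key hx0

theorem sqrt_mul_sub_le (h : IsEllipticNFun ρ ρ' ρ'' γ₁ γ₂) {a b : ℝ} (ha : 0 < a)
    (hb : 0 ≤ b) (hba : b ≤ a) :
    √(ρ' a / a) * (a - b) ≤ 4 * 2 ^ γ₂ / γ₁ * (√(ρ' a / a) * a - √(ρ' b / b) * b) := by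
  set x := √(ρ' a / a) * a
  set y := √(ρ' b / b) * b
  have hx2 : x ^ 2 = ρ' a * a := h.sq_sqrt_deriv_div_mul_self ha.le
  have hy2 : y ^ 2 = ρ' b * b := h.sq_sqrt_deriv_div_mul_self hb
  have hy : 0 ≤ y := mul_nonneg (Real.sqrt_nonneg _) hb
  have hyx : y ≤ x := h.sqrt_deriv_div_mul_le hb hba
  have hρa : ρ' a = √(ρ' a / a) * x := by
    rw [← mul_assoc, Real.mul_self_sqrt (div_nonneg (h.deriv_nonneg_s12 ha.le) ha.le),
      div_mul_cancel₀ _ ha.ne']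
  have hc : 0 ≤ 2 * 2 ^ γ₂ / γ₁ := div_nonneg (by positivity) h.gamma_pos.le
  have hrad := h.mul_sub_le_deriv_sub ha hb hba
  have key : x * (√(ρ' a / a) * (a - b)) ≤ x * (4 * 2 ^ γ₂ / γ₁ * (x - y)) := by
    have hsplit : (ρ' a - ρ' b) * a ≤ x ^ 2 - y ^ 2 := by
      rw [hx2, hy2]
      nlinarith [mul_le_mul_of_nonneg_right (h.deriv_nonneg_s12 hb) (sub_nonneg.2 hba)]
    calc x * (√(ρ' a / a) * (a - b)) = ρ' a / a * (a - b) * a := by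
          linear_combination (b - a) * hρa + (b - a) * h.deriv_div_mul_self a
      _ ≤ 2 * 2 ^ γ₂ / γ₁ * (ρ' a - ρ' b) * a := mul_le_mul_of_nonneg_right hrad ha.le
      _ ≤ 2 * 2 ^ γ₂ / γ₁ * (x ^ 2 - y ^ 2) := by
          rw [mul_assoc]; exact mul_le_mul_of_nonneg_left hsplit hc
      _ ≤ 2 * 2 ^ γ₂ / γ₁ * (2 * x * (x - y)) := by
          gcongr; nlinarith
      _ = x * (4 * 2 ^ γ₂ / γ₁ * (x - y)) := by ring
  rcases (hy.trans hyx).eq_or_lt with hx0 | hx0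
  · have hsqrt : √(ρ' a / a) = 0 := by
      have : x = 0 := hx0.symm
      simpa [x, ha.ne'] using this
    rw [hsqrt, zero_mul, ← hx0]
    have : y = 0 := le_antisymm (hx0 ▸ hyx) hy
    rw [this, sub_zero, mul_zero]
  · exact le_of_mul_le_mul_left key hx0

/- With `a = ‖P‖`, `b = ‖Q‖` and `e = ‖P - Q‖² - (‖P‖ - ‖Q‖)²`, the compared quantities below are
`(A(P) - A(Q)) : (P - Q)` and `|F(P) - F(Q)|²`, by `inner_smul_sub_smul_sub_self` and
`norm_smul_sub_smul_sq`, and `φ(a) ‖P - Q‖²`. -/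
theorem cmp_radial_add_angular (h : IsEllipticNFun ρ ρ' ρ'' γ₁ γ₂) {a b e : ℝ} (ha : 0 < a)
    (hb : 0 ≤ b) (hba : b ≤ a) (he : 0 ≤ e) (he' : e ≤ 4 * a * b) :
    Cmp (max (2 * (γ₂ + 1) + 9) (2 * 2 ^ γ₂ / γ₁ + 2))
      ((ρ' a - ρ' b) * (a - b) + (ρ' a / a + ρ' b / b) / 2 * e)
      (ρ' a / a * ((a - b) ^ 2 + e)) := by
  have hφa : 0 ≤ ρ' a / a := div_nonneg (h.deriv_nonneg_s12 ha.le) ha.le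
  have hφb : 0 ≤ ρ' b / b := div_nonneg (h.deriv_nonneg_s12 hb) hb
  have hab : 0 ≤ a - b := sub_nonneg.2 hba
  have hc : 0 ≤ 2 * 2 ^ γ₂ / γ₁ := div_nonneg (by positivity) h.gamma_pos.le
  have hradial : 0 ≤ (ρ' a - ρ' b) * (a - b) :=
    mul_nonneg (sub_nonneg.2 (h.deriv_mono_s12 hb hba)) hab
  have hangular : 0 ≤ (ρ' a / a + ρ' b / b) / 2 * e := by positivity
  have hupper := mul_le_mul_of_nonneg_right (h.deriv_sub_le_mul_sub ha hb hba) hab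
  have hlower := mul_le_mul_of_nonneg_right (h.mul_sub_le_deriv_sub ha hb hba) hab
  have hφb_e := h.deriv_div_mul_le ha hb hba he he'
  refine Cmp.of_le ?_ ?_ (add_nonneg hradial hangular) (mul_nonneg hφa (by positivity))
  · nlinarith [mul_nonneg h.gamma₂_pos_s12.le (mul_nonneg hφa he), mul_nonneg hφa he,
      mul_nonneg hφa (sq_nonneg (a - b))]
  · nlinarith [mul_nonneg hc hangular, mul_nonneg hφb he]

theorem cmp_sqrt_radial_add_angular (h : IsEllipticNFun ρ ρ' ρ'' γ₁ γ₂) {a b e : ℝ}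
    (ha : 0 < a) (hb : 0 ≤ b) (hba : b ≤ a) (he : 0 ≤ e) (he' : e ≤ 4 * a * b) :
    Cmp (max ((2 * (γ₂ + 1) + 1) ^ 2 + 9) (9 * (4 * 2 ^ γ₂ / γ₁) ^ 2 + 2 ^ γ₂))
      ((√(ρ' a / a) * a - √(ρ' b / b) * b) ^ 2 + √(ρ' a / a) * √(ρ' b / b) * e)
      (ρ' a / a * ((a - b) ^ 2 + e)) := by
  have hφa : 0 ≤ ρ' a / a := div_nonneg (h.deriv_nonneg_s12 ha.le) ha.le
  have hφb : 0 ≤ ρ' b / b := div_nonneg (h.deriv_nonneg_s12 hb) hb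
  have hab : 0 ≤ a - b := sub_nonneg.2 hba
  have hangular : 0 ≤ √(ρ' a / a) * √(ρ' b / b) * e := by positivity
  have hgap : 0 ≤ √(ρ' a / a) * a - √(ρ' b / b) * b :=
    sub_nonneg.2 (h.sqrt_deriv_div_mul_le hb hba)
  have hupper : (√(ρ' a / a) * a - √(ρ' b / b) * b) ^ 2
      ≤ (2 * (γ₂ + 1) + 1) ^ 2 * (ρ' a / a) * (a - b) ^ 2 := by
    calc _ ≤ ((2 * (γ₂ + 1) + 1) * √(ρ' a / a) * (a - b)) ^ 2 :=
          pow_le_pow_left₀ hgap (h.sqrt_mul_sub_sqrt_mul_le ha hb hba) 2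
      _ = _ := by rw [mul_pow, mul_pow, Real.sq_sqrt hφa]
  have hlower : ρ' a / a * (a - b) ^ 2
      ≤ (4 * 2 ^ γ₂ / γ₁) ^ 2 * (√(ρ' a / a) * a - √(ρ' b / b) * b) ^ 2 := by
    calc _ = (√(ρ' a / a) * (a - b)) ^ 2 := by rw [mul_pow, Real.sq_sqrt hφa]
      _ ≤ (4 * 2 ^ γ₂ / γ₁ * (√(ρ' a / a) * a - √(ρ' b / b) * b)) ^ 2 :=
          pow_le_pow_left₀ (by positivity) (h.sqrt_mul_sub_le ha hb hba) 2
      _ = _ := mul_pow _ _ _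
  have hamgm : √(ρ' a / a) * √(ρ' b / b) * e ≤ (ρ' a / a + ρ' b / b) / 2 * e := by
    refine mul_le_mul_of_nonneg_right ?_ he
    nlinarith [sq_nonneg (√(ρ' a / a) - √(ρ' b / b)), Real.sq_sqrt hφa, Real.sq_sqrt hφb]
  have hφb_e := h.deriv_div_mul_le ha hb hba he he'
  have hφa_e := h.deriv_div_mul_le_sqrt ha hb hba he he'
  refine Cmp.of_le ?_ ?_ (add_nonneg (sq_nonneg _) hangular) (mul_nonneg hφa (by positivity))
  · nlinarith [mul_nonneg (sq_nonneg (2 * (γ₂ + 1) + 1)) (mul_nonneg hφa he), mul_nonneg hφa he,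
      mul_nonneg hφa (sq_nonneg (a - b))]
  · nlinarith [mul_nonneg (sq_nonneg (4 * 2 ^ γ₂ / γ₁)) hangular,
      mul_nonneg (Real.rpow_nonneg zero_le_two γ₂) (sq_nonneg (√(ρ' a / a) * a - √(ρ' b / b) * b))]

theorem cmp_deriv_div_add (h : IsEllipticNFun ρ ρ' ρ'' γ₁ γ₂) {a b D : ℝ} (ha : 0 < a)
    (hb : 0 ≤ b) (hba : b ≤ a) (hD : 0 ≤ D) :
    Cmp (2 ^ γ₂ * 2) (ρ' a / a * D) (ρ' (a + b) / (a + b) * D) := by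
  constructor
  · simpa only [mul_assoc] using mul_le_mul_of_nonneg_right
      (h.deriv_div_le (by linarith) ha (by linarith) (by linarith) one_le_two) hD
  · simpa only [mul_assoc] using mul_le_mul_of_nonneg_right
      (h.deriv_div_le ha (by linarith) (by linarith) (by linarith) one_le_two) hD

theorem cmp_deriv2_mul (h : IsEllipticNFun ρ ρ' ρ'' γ₁ γ₂) {t D : ℝ} (ht : 0 < t) (hD : 0 ≤ D) :
    Cmp (max γ₂ γ₁⁻¹) (ρ'' t * D) (ρ' t / t * D) := by
  obtain ⟨hlow, hupp⟩ := h.elliptic t ht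
  have hφ : γ₁ * (ρ' t / t) ≤ ρ'' t := by rw [← mul_div_assoc, div_le_iff₀ ht]; linarith
  have hφ' : ρ'' t ≤ γ₂ * (ρ' t / t) := by rw [← mul_div_assoc, le_div_iff₀ ht]; linarith
  have hφ0 : 0 ≤ ρ' t / t := div_nonneg (h.deriv_nonneg_s12 ht.le) ht.le
  refine Cmp.of_le ?_ ?_ (mul_nonneg ((mul_nonneg h.gamma_pos.le hφ0).trans hφ) hD)
    (mul_nonneg hφ0 hD)
  · rw [← mul_assoc]; exact mul_le_mul_of_nonneg_right hφ' hD
  · rw [← mul_assoc]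
    refine mul_le_mul_of_nonneg_right ?_ hD
    rw [inv_mul_eq_div, le_div_iff₀' h.gamma_pos]; exact hφ

end IsEllipticNFun

theorem exists_cmp_inner_smul_sub_smul {γ₁ : ℝ} (γ₂ : ℝ) (hγ₁ : 0 < γ₁) : ∃ c, 0 < c ∧
    ∀ ρ ρ' ρ'' : ℝ → ℝ, IsEllipticNFun ρ ρ' ρ'' γ₁ γ₂ →
      ∀ {E : Type*} [NormedAddCommGroup E] [InnerProductSpace ℝ E] (P Q : E),
        Cmp c ⟪(ρ' ‖P‖ / ‖P‖) • P - (ρ' ‖Q‖ / ‖Q‖) • Q, P - Q⟫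
          (ρ' (‖P‖ + ‖Q‖) / (‖P‖ + ‖Q‖) * ‖P - Q‖ ^ 2) := by
  refine ⟨max (2 * (γ₂ + 1) + 9) (2 * 2 ^ γ₂ / γ₁ + 2) * (2 ^ γ₂ * 2), by positivity,
    fun ρ ρ' ρ'' h E _ _ P Q => ?_⟩
  wlog hQP : ‖Q‖ ≤ ‖P‖ generalizing P Q
  · have := this Q P (le_of_not_ge hQP)
    rwa [← inner_neg_neg, neg_sub, neg_sub, add_comm ‖P‖, norm_sub_rev P Q]
  rcases ((norm_nonneg Q).trans hQP).eq_or_lt with hP | hP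
  · obtain rfl : P = 0 := norm_eq_zero.1 hP.symm
    obtain rfl : Q = 0 := norm_le_zero_iff.1 (hP ▸ hQP)
    simp [Cmp]
  obtain ⟨he, he'⟩ := sq_norm_sub_sub_sq_mem_Icc P Q
  have key := (h.cmp_radial_add_angular hP (norm_nonneg Q) hQP he he').trans
    (h.cmp_deriv_div_add hP (norm_nonneg Q) hQP (add_nonneg (sq_nonneg _) he))
    (le_max_of_le_right (by positivity)) (by positivity)
  rw [add_sub_cancel] at key
  rwa [inner_smul_sub_smul_sub_self, h.deriv_div_mul_self, h.deriv_div_mul_self]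

theorem exists_cmp_norm_sqrt_smul_sub_sq (γ₁ γ₂ : ℝ) : ∃ c, 0 < c ∧
    ∀ ρ ρ' ρ'' : ℝ → ℝ, IsEllipticNFun ρ ρ' ρ'' γ₁ γ₂ →
      ∀ {E : Type*} [NormedAddCommGroup E] [InnerProductSpace ℝ E] (P Q : E),
        Cmp c (‖√(ρ' ‖P‖ / ‖P‖) • P - √(ρ' ‖Q‖ / ‖Q‖) • Q‖ ^ 2)
          (ρ' (‖P‖ + ‖Q‖) / (‖P‖ + ‖Q‖) * ‖P - Q‖ ^ 2) := by
  refine ⟨max ((2 * (γ₂ + 1) + 1) ^ 2 + 9) (9 * (4 * 2 ^ γ₂ / γ₁) ^ 2 + 2 ^ γ₂) * (2 ^ γ₂ * 2),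
    by positivity, fun ρ ρ' ρ'' h E _ _ P Q => ?_⟩
  wlog hQP : ‖Q‖ ≤ ‖P‖ generalizing P Q
  · have := this Q P (le_of_not_ge hQP)
    rwa [norm_sub_rev, add_comm ‖Q‖, norm_sub_rev Q P] at this
  rcases ((norm_nonneg Q).trans hQP).eq_or_lt with hP | hP
  · obtain rfl : P = 0 := norm_eq_zero.1 hP.symm
    obtain rfl : Q = 0 := norm_le_zero_iff.1 (hP ▸ hQP)
    simp [Cmp]
  obtain ⟨he, he'⟩ := sq_norm_sub_sub_sq_mem_Icc P Q
  have key := (h.cmp_sqrt_radial_add_angular hP (norm_nonneg Q) hQP he he').trans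
    (h.cmp_deriv_div_add hP (norm_nonneg Q) hQP (add_nonneg (sq_nonneg _) he))
    (le_max_of_le_left (by positivity)) (by positivity)
  rw [add_sub_cancel] at key
  rwa [norm_smul_sub_smul_sq (Real.sqrt_nonneg _) (Real.sqrt_nonneg _)]

theorem hammer_general (γ₁ γ₂ : ℝ) (hγ₁ : 0 < γ₁) :
    ∃ c : ℝ, 1 ≤ c ∧
      ∀ ρ ρ' ρ'' : ℝ → ℝ, IsEllipticNFun ρ ρ' ρ'' γ₁ γ₂ →
        ∀ (N n : ℕ) (P Q : EuclideanSpace ℝ (Fin N × Fin n)),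
          Cmp c ⟪Arho N n ρ' P - Arho N n ρ' Q, P - Q⟫
              (‖Frho N n ρ' P - Frho N n ρ' Q‖ ^ 2) ∧
          Cmp c ⟪Arho N n ρ' P - Arho N n ρ' Q, P - Q⟫
              (shift ρ' ‖P‖ ‖P - Q‖) ∧
          Cmp c (‖Frho N n ρ' P - Frho N n ρ' Q‖ ^ 2) (shift ρ' ‖P‖ ‖P - Q‖) ∧
          (0 < ‖P‖ + ‖Q‖ →
            Cmp c ⟪Arho N n ρ' P - Arho N n ρ' Q, P - Q⟫
                (ρ'' (‖P‖ + ‖Q‖) * ‖P - Q‖ ^ 2) ∧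
            Cmp c (‖Frho N n ρ' P - Frho N n ρ' Q‖ ^ 2)
                (ρ'' (‖P‖ + ‖Q‖) * ‖P - Q‖ ^ 2) ∧
            Cmp c (shift ρ' ‖P‖ ‖P - Q‖) (ρ'' (‖P‖ + ‖Q‖) * ‖P - Q‖ ^ 2)) := by
  obtain ⟨cA, hcA, hA⟩ := exists_cmp_inner_smul_sub_smul γ₂ hγ₁
  obtain ⟨cF, hcF, hF⟩ := exists_cmp_norm_sqrt_smul_sub_sq γ₁ γ₂
  have hmax : 0 < max γ₂ γ₁⁻¹ := lt_max_of_lt_right (inv_pos.2 hγ₁)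
  set K := cA + cF + 16 * (2 ^ γ₂) ^ 2 + max γ₂ γ₁⁻¹ + 1 with hK_def
  have h16 : 0 ≤ 16 * (2 ^ γ₂ : ℝ) ^ 2 := by positivity
  have hK : 1 ≤ K := by linarith
  refine ⟨K * K, one_le_mul_of_one_le_of_one_le hK hK, fun ρ ρ' ρ'' h N n P Q => ?_⟩
  have hΦ : 0 ≤ ρ' (‖P‖ + ‖Q‖) / (‖P‖ + ‖Q‖) * ‖P - Q‖ ^ 2 := by
    have := h.deriv_nonneg_s12 (add_nonneg (norm_nonneg P) (norm_nonneg Q)); positivity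
  have hK0 : 0 ≤ K := by linarith
  have hAK := (hA ρ ρ' ρ'' h P Q).mono (c' := K) hcA hΦ (by linarith)
  have hFK := (hF ρ ρ' ρ'' h P Q).mono (c' := K) hcF hΦ (by linarith)
  have hSK := (h.cmp_shift (norm_nonneg P) (norm_nonneg Q) (norm_nonneg (P - Q))
    (norm_le_insert P Q) (norm_sub_le P Q)).mono (c' := K) (by positivity) hΦ (by linarith)
  refine ⟨hAK.trans hFK.symm hK0 hK0, hAK.trans hSK.symm hK0 hK0,
    hFK.trans hSK.symm hK0 hK0, fun hpos => ?_⟩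
  have hρK := (h.cmp_deriv2_mul hpos (sq_nonneg ‖P - Q‖)).mono (c' := K) hmax hΦ (by linarith)
  exact ⟨hAK.trans hρK.symm hK0 hK0, hFK.trans hρK.symm hK0 hK0, hSK.trans hρK.symm hK0 hK0⟩

/-- For an elliptic N-function `ρ` there is `c ≥ 1`, depending only on the characteristics,
such that `(A^ρ(P) - A^ρ(Q)) : (P - Q)`, `|F^ρ(P) - F^ρ(Q)|²` and `ρ_{|P|}(|P - Q|)` are
pairwise comparable with constant `c`, and, whenever `|P| + |Q| > 0`, each is comparable
with constant `c` to `ρ''(|P| + |Q|) |P - Q|²`. -/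
theorem hammer (γ₁ γ₂ : ℝ) (hγ₁ : 0 < γ₁) (hγ : γ₁ ≤ γ₂) :
    ∃ c : ℝ, 1 ≤ c ∧
      ∀ ρ ρ' ρ'' : ℝ → ℝ, IsEllipticNFun ρ ρ' ρ'' γ₁ γ₂ →
        ∀ (N n : ℕ) (P Q : EuclideanSpace ℝ (Fin N × Fin n)),
          Cmp c ⟪Arho N n ρ' P - Arho N n ρ' Q, P - Q⟫
              (‖Frho N n ρ' P - Frho N n ρ' Q‖ ^ 2) ∧
          Cmp c ⟪Arho N n ρ' P - Arho N n ρ' Q, P - Q⟫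
              (shift ρ' ‖P‖ ‖P - Q‖) ∧
          Cmp c (‖Frho N n ρ' P - Frho N n ρ' Q‖ ^ 2) (shift ρ' ‖P‖ ‖P - Q‖) ∧
          (0 < ‖P‖ + ‖Q‖ →
            Cmp c ⟪Arho N n ρ' P - Arho N n ρ' Q, P - Q⟫
                (ρ'' (‖P‖ + ‖Q‖) * ‖P - Q‖ ^ 2) ∧
            Cmp c (‖Frho N n ρ' P - Frho N n ρ' Q‖ ^ 2)
                (ρ'' (‖P‖ + ‖Q‖) * ‖P - Q‖ ^ 2) ∧
            Cmp c (shift ρ' ‖P‖ ‖P - Q‖) (ρ'' (‖P‖ + ‖Q‖) * ‖P - Q‖ ^ 2)) :=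
  hammer_general γ₁ γ₂ hγ₁
end
end
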